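/- arXiv:1903.05793 — 6 statements merged into one kernel-verified Lean document; each statement's English description precedes it below -/
import Mathlib

section
/- (Abstract iteration lemma.) Suppose 0 < a < b < ∞, 0 < p < q < ∞, and ρ, τ ∈ (0,∞). If a sequence (a_j)_{j≥1} of real numbers satisfies a ≤ a_j ≤ b for all j and a_{j+1}^{1/q} ≤ ρ τ^j a_j^{1/p} for all j ≥ 1, then a_1^{1−p/q} · ρ^p · τ^{pq/(q−p)} ≥ 1. -/
open Set Filter Finset Real

theorem stmt5 {a b p q ρ τ : ℝ} (ha : 0 < a) (hab : a < b)
    (hp : 0 < p) (hpq : p < q) (hρ : 0 < ρ) (hτ : 0 < τ)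
    (A : ℕ → ℝ) (hA : ∀ j : ℕ, 1 ≤ j → A j ∈ Icc a b)
    (hrec : ∀ j : ℕ, 1 ≤ j → (A (j + 1)) ^ (1 / q) ≤ ρ * τ ^ j * (A j) ^ (1 / p)) :
    1 ≤ (A 1) ^ (1 - p / q) * ρ ^ p * τ ^ (p * q / (q - p)) := by
  have hq : 0 < q := hp.trans hpq
  set α : ℝ := p / q with hα
  have hα0 : 0 < α := div_pos hp hq
  have hα1 : α < 1 := (div_lt_one hq).mpr hpq
  have h1α : 0 < 1 - α := by linarith
  have hApos : ∀ j : ℕ, 1 ≤ j → 0 < A j := fun j hj => ha.trans_le (hA j hj).1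
  set S : ℕ → ℝ := fun n => ∑ j ∈ Finset.range n, α ^ j with hSdef
  set T : ℕ → ℝ := fun n => ∑ j ∈ Finset.range n, ((j : ℝ) + 1) * α ^ j with hTdef
  have key : ∀ n : ℕ, α ^ n * Real.log (A (n + 1)) ≤
      Real.log (A 1) + p * S n * Real.log ρ + p * T n * Real.log τ := by
    intro n
    induction n with
    | zero => simp [hSdef, hTdef]
    | succ n ih =>
      have h1 : (A (n + 1 + 1)) ^ (1 / q) ≤ ρ * τ ^ (n + 1) * (A (n + 1)) ^ (1 / p) :=
        hrec (n + 1) (by omega)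
      have hA2 : 0 < A (n + 1 + 1) := hApos _ (by omega)
      have hA1 : 0 < A (n + 1) := hApos _ (by omega)
      have hlog := Real.log_le_log (by positivity) h1
      rw [Real.log_rpow hA2, Real.log_mul (by positivity) (by positivity),
        Real.log_mul (by positivity) (by positivity), Real.log_rpow hA1,
        Real.log_pow] at hlog
      push_cast at hlog
      have hx : (0 : ℝ) < p * α ^ n := by positivity
      have h2 := mul_le_mul_of_nonneg_left hlog hx.le
      have e1 : p * α ^ n * (1 / q * Real.log (A (n + 1 + 1)))
          = α ^ (n + 1) * Real.log (A (n + 1 + 1)) := by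
        rw [pow_succ, hα]; ring
      have e2 : p * α ^ n * (Real.log ρ + ((n : ℝ) + 1) * Real.log τ
            + 1 / p * Real.log (A (n + 1)))
          = p * α ^ n * Real.log ρ + p * ((n : ℝ) + 1) * α ^ n * Real.log τ
            + α ^ n * Real.log (A (n + 1)) := by
        have hpne : p ≠ 0 := hp.ne'
        field_simp
      rw [e1, e2] at h2
      have hSs : S (n + 1) = S n + α ^ n := Finset.sum_range_succ _ n
      have hTs : T (n + 1) = T n + ((n : ℝ) + 1) * α ^ n := Finset.sum_range_succ _ n
      rw [hSs, hTs]
      nlinarith [h2, ih]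
  -- limits
  have hS_lim : Tendsto S atTop (nhds (1 - α)⁻¹) :=
    (hasSum_geometric_of_lt_one hα0.le hα1).tendsto_sum_nat
  have hT_sum : HasSum (fun j : ℕ => ((j : ℝ) + 1) * α ^ j) (α / (1 - α) ^ 2 + (1 - α)⁻¹) := by
    have h1 := hasSum_coe_mul_geometric_of_norm_lt_one (𝕜 := ℝ) (r := α)
      (by rwa [Real.norm_eq_abs, abs_of_pos hα0])
    have h2 := hasSum_geometric_of_lt_one hα0.le hα1
    have hfun : (fun j : ℕ => ((j : ℝ) + 1) * α ^ j)
        = fun j : ℕ => (j : ℝ) * α ^ j + α ^ j := by funext j; ring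
    rw [hfun]
    exact h1.add h2
  have hT_lim : Tendsto T atTop (nhds (α / (1 - α) ^ 2 + (1 - α)⁻¹)) :=
    hT_sum.tendsto_sum_nat
  have hg_lim : Tendsto (fun n => Real.log (A 1) + p * S n * Real.log ρ + p * T n * Real.log τ)
      atTop (nhds (Real.log (A 1) + p * (1 - α)⁻¹ * Real.log ρ
        + p * (α / (1 - α) ^ 2 + (1 - α)⁻¹) * Real.log τ)) :=
    ((tendsto_const_nhds.add ((hS_lim.const_mul p).mul_const _)).add
      ((hT_lim.const_mul p).mul_const _))
  have hf_lim : Tendsto (fun n : ℕ => α ^ n * Real.log a) atTop (nhds 0) := by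
    simpa using (tendsto_pow_atTop_nhds_zero_of_lt_one hα0.le hα1).mul_const (Real.log a)
  have main : (0 : ℝ) ≤ Real.log (A 1) + p * (1 - α)⁻¹ * Real.log ρ
      + p * (α / (1 - α) ^ 2 + (1 - α)⁻¹) * Real.log τ := by
    refine le_of_tendsto_of_tendsto' hf_lim hg_lim fun n => ?_
    refine le_trans ?_ (key n)
    exact mul_le_mul_of_nonneg_left
      (Real.log_le_log ha (hA (n + 1) (by omega)).1) (by positivity)
  have hqp : q - p ≠ 0 := ne_of_gt (by linarith)
  have main2 : (0 : ℝ) ≤ (1 - p / q) * Real.log (A 1) + p * Real.log ρ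
      + (p * q / (q - p)) * Real.log τ := by
    have hmul := mul_nonneg h1α.le main
    have heq : (1 - α) * (Real.log (A 1) + p * (1 - α)⁻¹ * Real.log ρ
        + p * (α / (1 - α) ^ 2 + (1 - α)⁻¹) * Real.log τ)
        = (1 - p / q) * Real.log (A 1) + p * Real.log ρ
          + (p * q / (q - p)) * Real.log τ := by
      rw [hα]
      have h1 : (1 : ℝ) - p / q = (q - p) / q := by field_simp
      rw [h1]
      field_simp
      ring
    linarith [heq ▸ hmul]
  have hA1 : 0 < A 1 := hApos 1 le_rfl
  have hX : 0 < (A 1) ^ (1 - p / q) * ρ ^ p * τ ^ (p * q / (q - p)) := by positivity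
  rw [← Real.log_nonneg_iff hX, Real.log_mul (by positivity) (by positivity),
    Real.log_mul (by positivity) (by positivity), Real.log_rpow hA1,
    Real.log_rpow hρ, Real.log_rpow hτ]
  linarith [main2]
end

section
/- Let (X,d,μ) be a uniformly perfect metric-measure space with uniform perfectness constant λ ∈ (0, 1/5), meaning B(x,r)\B(x,λr) ≠ ∅ whenever X\B(x,r) ≠ ∅. Let x ∈ X and r ∈ (0, diam(X)] finite with r > 3φ_x(r)/λ². Then there exists a ball B(x̃, r̃) ⊆ B(x,r) with λr < r̃ ≤ min{ r, 3φ_{x̃}(r̃)/λ² }. -/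
set_option maxHeartbeats 1000000


open Metric MeasureTheory Set

/-- The "half-measure radius" function `φ_x(r)`. -/
noncomputable def phi {X : Type*} [MetricSpace X] [MeasurableSpace X]
    (μ : Measure X) (x : X) (r : ℝ) : ℝ :=
  sSup {s : ℝ | s ∈ Icc 0 r ∧ μ (ball x s) ≤ μ (ball x r) / 2}

lemma phi_mem_Icc {X : Type*} [MetricSpace X] [MeasurableSpace X]
    (μ : Measure X) (x : X) {r : ℝ} (hr0 : 0 < r) :
    phi μ x r ∈ Icc (0:ℝ) r := by
  have h0 : (0:ℝ) ∈ {s : ℝ | s ∈ Icc 0 r ∧ μ (ball x s) ≤ μ (ball x r) / 2} := by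
    refine ⟨⟨le_refl 0, hr0.le⟩, ?_⟩
    simp [Metric.ball_zero]
  have hbdd : BddAbove {s : ℝ | s ∈ Icc 0 r ∧ μ (ball x s) ≤ μ (ball x r) / 2} :=
    ⟨r, fun s hs => hs.1.2⟩
  constructor
  · exact le_csSup hbdd h0
  · exact Real.sSup_le (fun s hs => hs.1.2) hr0.le

lemma half_le_closedBall {X : Type*} [MetricSpace X] [MeasurableSpace X] [BorelSpace X]
    (μ : Measure X)
    (hμ : ∀ (x : X) (r : ℝ), 0 < r → 0 < μ (ball x r) ∧ μ (ball x r) < ⊤)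
    (x : X) {r : ℝ} (hr0 : 0 < r) (hφr : phi μ x r < r) :
    μ (ball x r) / 2 ≤ μ (closedBall x (phi μ x r)) := by
  set φ := phi μ x r with hφdef
  have hφ0 : 0 ≤ φ := (phi_mem_Icc μ x hr0).1
  set s : ℕ → Set X := fun n => ball x (φ + 1 / (n + 1)) with hs
  have hInter : ⋂ n, s n = closedBall x φ := by
    ext y
    simp only [mem_iInter, hs, mem_ball, mem_closedBall]
    constructor
    · intro h
      by_contra hc
      push_neg at hc
      obtain ⟨n, hn⟩ := exists_nat_one_div_lt (sub_pos.mpr hc)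
      have := h n
      linarith
    · intro h n
      have : (0:ℝ) < 1 / (n + 1) := by positivity
      linarith
  have hmeas : ∀ n, NullMeasurableSet (s n) μ :=
    fun n => (measurableSet_ball).nullMeasurableSet
  have hanti : Antitone s := by
    intro m n hmn
    apply ball_subset_ball
    have : (m:ℝ) + 1 ≤ (n:ℝ) + 1 := by exact_mod_cast Nat.succ_le_succ hmn
    have h1 : (0:ℝ) < (m:ℝ) + 1 := by positivity
    gcongr
  have hfin : ∃ n, μ (s n) ≠ ⊤ := by
    refine ⟨0, ?_⟩
    have h : (0:ℝ) < φ + 1 / ((0:ℕ) + 1) := by positivity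
    simpa [hs] using ((hμ x _ h).2).ne
  have htend := tendsto_measure_iInter_atTop hmeas hanti hfin
  rw [hInter] at htend
  -- eventually μ (s n) ≥ μ (ball x r) / 2
  obtain ⟨N, hN⟩ := exists_nat_one_div_lt (sub_pos.mpr hφr)
  have hev : ∀ n ≥ N, μ (ball x r) / 2 ≤ (μ ∘ s) n := by
    intro n hn
    have hle : 1 / ((n:ℝ) + 1) ≤ 1 / ((N:ℝ) + 1) := by
      have : (N:ℝ) + 1 ≤ (n:ℝ) + 1 := by exact_mod_cast Nat.succ_le_succ hn
      have h1 : (0:ℝ) < (N:ℝ) + 1 := by positivity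
      gcongr
    have hsn_le_r : φ + 1 / ((n:ℝ) + 1) ≤ r := by linarith
    by_contra hc
    push_neg at hc
    have hmem : (φ + 1 / ((n:ℝ) + 1)) ∈
        {s : ℝ | s ∈ Icc 0 r ∧ μ (ball x s) ≤ μ (ball x r) / 2} := by
      refine ⟨⟨by positivity, hsn_le_r⟩, hc.le⟩
    have hbdd : BddAbove {s : ℝ | s ∈ Icc 0 r ∧ μ (ball x s) ≤ μ (ball x r) / 2} :=
      ⟨r, fun t ht => ht.1.2⟩
    have : φ + 1 / ((n:ℝ) + 1) ≤ φ := le_csSup hbdd hmem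
    have hpos : (0:ℝ) < 1 / ((n:ℝ) + 1) := by positivity
    linarith
  exact ge_of_tendsto htend (Filter.eventually_atTop.mpr ⟨N, hev⟩)

theorem stmt7 {X : Type*} [MetricSpace X] [MeasurableSpace X] [BorelSpace X]
    (μ : Measure X)
    (hμ : ∀ (x : X) (r : ℝ), 0 < r → 0 < μ (ball x r) ∧ μ (ball x r) < ⊤)
    {lam : ℝ} (hlam0 : 0 < lam) (hlam : lam < 1 / 5)
    -- uniform perfectness with constant lam
    (hup : ∀ (x : X) (r : ℝ), 0 < r → ball x r ≠ univ →
      (ball x r \ ball x (lam * r)).Nonempty)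
    (x : X) {r : ℝ} (hr0 : 0 < r)
    (hrdiam : ENNReal.ofReal r ≤ EMetric.diam (univ : Set X))
    (hbig : 3 * phi μ x r / lam ^ 2 < r) :
    ∃ (x' : X) (r' : ℝ), ball x' r' ⊆ ball x r ∧ lam * r < r' ∧
      r' ≤ min r (3 * phi μ x' r' / lam ^ 2) := by
  set φ := phi μ x r with hφdef
  have hφ0 : 0 ≤ φ := (phi_mem_Icc μ x hr0).1
  clear_value φ
  have hlam2 : (0:ℝ) < lam ^ 2 := by positivity
  have hφsmall : 3 * φ < lam ^ 2 * r := by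
    have := (div_lt_iff₀ hlam2).mp hbig
    linarith
  have hsq1 : lam ^ 2 < 1 := by nlinarith
  have hl21 : lam ^ 2 * r < r := by nlinarith [mul_lt_mul_of_pos_right hsq1 hr0]
  have hφr : φ < r := by linarith
  -- the auxiliary radius
  set R := φ / lam + 2 * lam * r with hRdef
  clear_value R
  have hR0 : 0 < R := by
    have : 0 ≤ φ / lam := by positivity
    have : 0 < 2 * lam * r := by positivity
    rw [hRdef]; linarith [div_nonneg hφ0 hlam0.le]
  have hφl : φ / lam < lam * r / 3 := by
    rw [div_lt_div_iff₀ hlam0 (by norm_num : (0:ℝ) < 3)]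
    nlinarith
  have hRr : 2 * R < r := by
    rw [hRdef]
    nlinarith
  -- ball x R is not the whole space
  have hne : ball x R ≠ univ := by
    intro h
    have hdiam : EMetric.diam (univ : Set X) ≤ ENNReal.ofReal (2 * R) := by
      apply EMetric.diam_le
      intro y hy z hz
      have hy' : y ∈ ball x R := h ▸ (mem_univ y)
      have hz' : z ∈ ball x R := h ▸ (mem_univ z)
      rw [mem_ball] at hy' hz'
      rw [edist_dist]
      apply ENNReal.ofReal_le_ofReal
      have := dist_triangle y x z
      have h1 : dist x z = dist z x := dist_comm x z
      linarith
    have : ENNReal.ofReal r ≤ ENNReal.ofReal (2 * R) := le_trans hrdiam hdiam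
    rw [ENNReal.ofReal_le_ofReal_iff (by linarith)] at this
    linarith
  obtain ⟨x', hx'⟩ := hup x R hR0 hne
  obtain ⟨hx'1, hx'2⟩ := hx'
  rw [mem_ball] at hx'1
  simp only [mem_ball, not_lt] at hx'2
  have hlamR : lam * R = φ + 2 * lam ^ 2 * r := by
    rw [hRdef]
    field_simp
  rw [hlamR] at hx'2
  -- new radius
  set r' := 2 * φ / lam + 2 * lam * r with hr'def
  clear_value r'
  have hr'pos : 0 < r' := by
    have h1 : 0 ≤ 2 * φ / lam := by positivity
    have h2 : 0 < 2 * lam * r := by positivity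
    rw [hr'def]; linarith
  have hr'lam : lam * r < r' := by
    have h1 : 0 ≤ 2 * φ / lam := by positivity
    rw [hr'def]; nlinarith
  have hr'r : r' ≤ r := by
    rw [hr'def]
    have h2φ : 2 * φ / lam < 2 * (lam * r / 3) := by
      rw [div_lt_iff₀ hlam0]; nlinarith
    nlinarith
  have hlamr'2 : lam * r' / 2 = φ + lam ^ 2 * r := by
    rw [hr'def]
    field_simp
  -- inclusions
  have hsub_main : ball x' r' ⊆ ball x r := by
    intro y hy
    rw [mem_ball] at hy ⊢
    have ht := dist_triangle y x' x
    have hd : dist x' x < R := hx'1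
    have : dist y x < r' + R := by linarith
    have : r' + R ≤ r := by
      rw [hr'def, hRdef]
      have h3φ : 3 * (φ / lam) < 3 * (lam * r / 3) := by linarith
      nlinarith
    linarith
  have hsub_cb : closedBall x φ ⊆ ball x' r' := by
    intro y hy
    rw [mem_closedBall] at hy
    rw [mem_ball]
    have ht := dist_triangle y x x'
    have h1 : dist x x' < R := by rw [dist_comm]; exact hx'1
    have hφle : φ ≤ φ / lam := by
      rw [le_div_iff₀ hlam0]; nlinarith
    have h2 : dist y x' < φ + R := by linarith
    have hRalt : φ + R ≤ r' := by
      rw [hRdef, hr'def]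
      have : 2 * φ / lam = 2 * (φ / lam) := by ring
      rw [this]
      linarith
    linarith
  have hsub_small : ball x' (lam * r' / 2) ⊆ ball x r := by
    intro y hy
    rw [mem_ball] at hy ⊢
    rw [hlamr'2] at hy
    have ht := dist_triangle y x' x
    have : dist y x < (φ + lam ^ 2 * r) + R := by linarith
    rw [hRdef] at this
    have h3φ : φ + φ / lam ≤ 2 * (φ / lam) := by
      have : φ ≤ φ / lam := by rw [le_div_iff₀ hlam0]; nlinarith
      linarith
    nlinarith [hφl]
  have hdisj : Disjoint (ball x' (lam * r' / 2)) (closedBall x φ) := by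
    rw [Set.disjoint_left]
    intro y hy hy2
    rw [mem_ball, hlamr'2] at hy
    rw [mem_closedBall] at hy2
    have ht := dist_triangle x' y x
    rw [dist_comm y x'] at hy
    linarith [hx'2, hφsmall, hφ0]
  have hsub_small' : ball x' (lam * r' / 2) ⊆ ball x' r' := by
    apply ball_subset_ball
    nlinarith
  -- measure estimates
  set a := μ (ball x r) with hadef
  have ha := hμ x r hr0
  have hφr2 : phi μ x r < r := by rw [← hφdef]; exact hφr
  have hcb := half_le_closedBall μ hμ x hr0 hφr2
  rw [← hφdef, ← hadef] at hcb
  set m1 := μ (ball x' (lam * r' / 2)) with hm1def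
  set m2 := μ (closedBall x φ) with hm2def
  have hsum : m1 + m2 ≤ a := by
    rw [hm1def, hm2def, ← measure_union hdisj measurableSet_closedBall]
    apply measure_mono
    apply union_subset hsub_small
    intro y hy
    rw [mem_closedBall] at hy
    rw [mem_ball]
    linarith
  have hm1half : m1 ≤ a / 2 := by
    have h1 : m1 + a / 2 ≤ a / 2 + a / 2 := by
      calc m1 + a / 2 ≤ m1 + m2 := by gcongr
        _ ≤ a := hsum
        _ = a / 2 + a / 2 := (ENNReal.add_halves a).symm
    have h2 : a / 2 ≠ ⊤ := by
      exact (ENNReal.div_lt_top ha.2.ne (by norm_num)).ne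
    rw [ENNReal.add_le_add_iff_right h2] at h1
    exact h1
  have hsum2 : m1 + m2 ≤ μ (ball x' r') := by
    rw [hm1def, hm2def, ← measure_union hdisj measurableSet_closedBall]
    exact measure_mono (union_subset hsub_small' hsub_cb)
  have hkey : m1 ≤ μ (ball x' r') / 2 := by
    rw [ENNReal.le_div_iff_mul_le (Or.inl (by norm_num)) (Or.inl (by norm_num))]
    calc m1 * 2 = m1 + m1 := by ring
      _ ≤ m1 + m2 := by gcongr; exact le_trans hm1half hcb
      _ ≤ μ (ball x' r') := hsum2
  -- phi at the new ball
  have hphi' : lam * r' / 2 ≤ phi μ x' r' := by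
    refine le_csSup ⟨r', fun t ht => ht.1.2⟩ ?_
    refine ⟨⟨by positivity, by nlinarith⟩, hkey⟩
  refine ⟨x', r', hsub_main, hr'lam, le_min hr'r ?_⟩
  rw [le_div_iff₀ hlam2]
  nlinarith [hphi']
end

section
/- Let (X,d,μ) be a uniformly perfect metric-measure space with constant λ ∈ (0,1/5), fix s ∈ (0,∞), and assume there is C > 0 such that μ(B(x,r)) ≥ C r^s whenever x ∈ X and finite r ∈ (0, diam(X)] satisfy r ≤ 3φ_x(r)/λ². Then μ(B(x,r)) ≥ C λ^s r^s for every x ∈ X and every finite r ∈ (0, diam(X)]. -/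
open Metric MeasureTheory Set

set_option maxHeartbeats 1000000 in
theorem stmt8 {X : Type*} [MetricSpace X] [MeasurableSpace X] [BorelSpace X]
    (μ : Measure X)
    (hμ : ∀ (x : X) (r : ℝ), 0 < r → 0 < μ (ball x r) ∧ μ (ball x r) < ⊤)
    {lam : ℝ} (hlam0 : 0 < lam) (hlam : lam < 1 / 5)
    (hup : ∀ (x : X) (r : ℝ), 0 < r → ball x r ≠ univ →
      (ball x r \ ball x (lam * r)).Nonempty)
    {s C : ℝ} (hs : 0 < s) (hC : 0 < C)
    (hyp : ∀ (x : X) (r : ℝ), 0 < r → ENNReal.ofReal r ≤ EMetric.diam (univ : Set X) →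
      r ≤ 3 * phi μ x r / lam ^ 2 → ENNReal.ofReal (C * r ^ s) ≤ μ (ball x r)) :
    ∀ (x : X) (r : ℝ), 0 < r → ENNReal.ofReal r ≤ EMetric.diam (univ : Set X) →
      ENNReal.ofReal (C * lam ^ s * r ^ s) ≤ μ (ball x r) := by
  have hlam1 : lam < 1 := by linarith
  have hl2 : (0:ℝ) < lam ^ 2 := by positivity
  have hl21 : lam ^ 2 < 1 := by nlinarith
  have hl225 : lam ^ 2 < 1 / 25 := by nlinarith
  have hbdd : ∀ (y : X) (t : ℝ),
      BddAbove {s : ℝ | s ∈ Icc 0 t ∧ μ (ball y s) ≤ μ (ball y t) / 2} :=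
    fun y t => ⟨t, fun a ha => ha.1.2⟩
  intro x r hr hrdiam
  have hlr : lam * r < r / 5 := by nlinarith
  have hl2r : lam ^ 2 * r < r / 25 := by nlinarith
  by_cases hgood : r ≤ 3 * phi μ x r / lam ^ 2
  · refine le_trans (ENNReal.ofReal_le_ofReal ?_) (hyp x r hr hrdiam hgood)
    have h1 : lam ^ s ≤ 1 := Real.rpow_le_one hlam0.le hlam1.le hs.le
    have h2 : 0 < r ^ s := Real.rpow_pos_of_pos hr s
    nlinarith [mul_nonneg (mul_nonneg hC.le h2.le) (sub_nonneg.mpr h1)]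
  · push_neg at hgood
    set ρ : ℝ := lam ^ 2 * r / 3 with hρdef
    clear_value ρ
    have hρpos : 0 < ρ := by rw [hρdef]; positivity
    have hρr : ρ ≤ r := by rw [hρdef]; linarith
    have hconc : μ (ball x r) / 2 < μ (ball x ρ) := by
      by_contra h
      push_neg at h
      have hmem : ρ ≤ phi μ x r := le_csSup (hbdd x r) ⟨⟨hρpos.le, hρr⟩, h⟩
      rw [hρdef] at hmem
      have : r ≤ 3 * phi μ x r / lam ^ 2 := by
        rw [le_div_iff₀ hl2]; nlinarith
      linarith
    -- uniform perfectness at scale u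
    set u : ℝ := 2 * lam * r / 3 with hudef
    clear_value u
    have hupos : 0 < u := by rw [hudef]; positivity
    have hur : u < r := by rw [hudef]; linarith
    have hne : ball x u ≠ univ := by
      intro hball
      have h1 : EMetric.diam (univ : Set X) ≤ 2 * ENNReal.ofReal u := by
        rw [← hball, ← Metric.emetric_ball]
        exact EMetric.diam_ball
      have h2 : ENNReal.ofReal r ≤ ENNReal.ofReal (2 * u) := by
        calc ENNReal.ofReal r ≤ _ := hrdiam
          _ ≤ 2 * ENNReal.ofReal u := h1
          _ = ENNReal.ofReal (2 * u) := by
              rw [ENNReal.ofReal_mul (by norm_num : (0:ℝ) ≤ 2)]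
              norm_num
      have h3 : r ≤ 2 * u := (ENNReal.ofReal_le_ofReal_iff (by positivity)).mp h2
      rw [hudef] at h3
      linarith
    obtain ⟨z, hz1, hz2⟩ := hup x u hupos hne
    rw [mem_ball] at hz1
    rw [mem_ball, not_lt] at hz2
    set D : ℝ := dist x z with hDdef
    clear_value D
    have hDzx : dist z x = D := by rw [hDdef]; exact dist_comm z x
    have hD2 : D < u := by rw [← hDzx]; exact hz1
    have hD1 : lam * u ≤ D := by rw [← hDzx]; exact hz2
    have hD2' : D < 2 * lam * r / 3 := by rw [← hudef]; exact hD2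
    have hD1' : 2 * lam ^ 2 * r / 3 ≤ D := by
      have hlu : lam * u = 2 * lam ^ 2 * r / 3 := by rw [hudef]; ring
      linarith
    have hD0 : 0 ≤ D := hDdef ▸ dist_nonneg
    set t' : ℝ := r - D with ht'def
    clear_value t'
    have ht'pos : 0 < t' := by rw [ht'def]; linarith
    have hlt : lam * r < t' := by rw [ht'def]; linarith
    have ht'r : t' ≤ r := by rw [ht'def]; linarith
    have hsub : ball z t' ⊆ ball x r := by
      apply ball_subset_ball'
      rw [dist_comm z x, ← hDdef, ht'def]
      linarith
    have hsub2 : ball x ρ ⊆ ball z t' := by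
      apply ball_subset_ball'
      rw [← hDdef, ht'def, hρdef]
      linarith
    set ρ' : ℝ := lam ^ 2 * t' / 3 with hρ'def
    clear_value ρ'
    have hρ'pos : 0 < ρ' := by rw [hρ'def]; positivity
    have hρ't : ρ' ≤ t' := by
      have h5 : lam ^ 2 * t' < 1 * t' := mul_lt_mul_of_pos_right hl21 ht'pos
      rw [hρ'def]; linarith
    have hρ'ρ : ρ' ≤ ρ := by
      have h6 : lam ^ 2 * t' ≤ lam ^ 2 * r := mul_le_mul_of_nonneg_left ht'r hl2.le
      rw [hρ'def, hρdef]; linarith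
    have hdisj : Disjoint (ball x ρ) (ball z ρ') := by
      rw [Set.disjoint_left]
      intro w hw hw'
      rw [mem_ball] at hw hw'
      have hDle : D ≤ dist w x + dist w z := by
        rw [hDdef, dist_comm w x]
        exact dist_triangle x w z
      have hρval : ρ = lam ^ 2 * r / 3 := hρdef
      have : D < ρ + ρ' := by linarith
      have : ρ + ρ' ≤ 2 * lam ^ 2 * r / 3 := by
        rw [hρval] at hρ'ρ ⊢
        linarith
      linarith
    have hA' : μ (ball z ρ') ≤ μ (ball z t') / 2 := by
      by_contra h
      push_neg at h
      have hm : μ (ball x ρ) + μ (ball z ρ') ≤ μ (ball z t') := by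
        rw [← measure_union hdisj measurableSet_ball]
        exact measure_mono (union_subset hsub2 (ball_subset_ball hρ't))
      have hmono : μ (ball z t') ≤ μ (ball x r) := measure_mono hsub
      have hlt2 : μ (ball x r) / 2 + μ (ball z t') / 2
          < μ (ball x ρ) + μ (ball z ρ') := ENNReal.add_lt_add hconc h
      have hcontra : μ (ball z t') < μ (ball z t') := by
        calc μ (ball z t') = μ (ball z t') / 2 + μ (ball z t') / 2 :=
              (ENNReal.add_halves _).symm
          _ ≤ μ (ball x r) / 2 + μ (ball z t') / 2 :=
              add_le_add_left (ENNReal.div_le_div_right hmono 2) _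
          _ < μ (ball x ρ) + μ (ball z ρ') := hlt2
          _ ≤ μ (ball z t') := hm
      exact lt_irrefl _ hcontra
    have hphi : ρ' ≤ phi μ z t' := le_csSup (hbdd z t') ⟨⟨hρ'pos.le, hρ't⟩, hA'⟩
    have hgood' : t' ≤ 3 * phi μ z t' / lam ^ 2 := by
      rw [le_div_iff₀ hl2]
      rw [hρ'def] at hphi
      nlinarith
    have hdiam' : ENNReal.ofReal t' ≤ EMetric.diam (univ : Set X) :=
      le_trans (ENNReal.ofReal_le_ofReal ht'r) hrdiam
    have hkey := hyp z t' ht'pos hdiam' hgood'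
    calc ENNReal.ofReal (C * lam ^ s * r ^ s)
        ≤ ENNReal.ofReal (C * t' ^ s) := by
          apply ENNReal.ofReal_le_ofReal
          have e1 : lam ^ s * r ^ s = (lam * r) ^ s :=
            (Real.mul_rpow hlam0.le hr.le).symm
          have e2 : (lam * r) ^ s ≤ t' ^ s :=
            Real.rpow_le_rpow (by positivity) hlt.le hs.le
          calc C * lam ^ s * r ^ s = C * ((lam * r) ^ s) := by rw [mul_assoc, e1]
            _ ≤ C * t' ^ s := mul_le_mul_of_nonneg_left e2 hC.le
      _ ≤ μ (ball z t') := hkey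
      _ ≤ μ (ball x r) := measure_mono hsub
end

section
/- (Sobolev embedding implies lower mass bound, case p < s.) Let (X,d,μ) be a metric-measure space, σ ≥ 1, 0 < p < s, p* = sp/(s−p). Suppose there is C_S > 0 such that for every ball B_0 = B(x_0,R_0) with finite R_0 ∈ (0, diam(X)], the inequality (⨍_{B_0}|u|^{p*}dμ)^{1/p*} ≤ C_S (μ(σB_0)/R_0^s)^{1/p} [ R_0(⨍_{σB_0}g^p dμ)^{1/p} + (⨍_{σB_0}|u|^p dμ)^{1/p} ] holds for all u ∈ M^{1,p}(σB_0,d,μ) and g ∈ D(u). Then μ(B(x,r)) ≥ 2^{−s}(8C_S)^{−p} r^s for every x ∈ X and every finite r ∈ (0, diam(X)]. -/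
open Metric MeasureTheory Set Filter
open scoped ENNReal NNReal

/-- `g` is a Hajłasz gradient of `u` on `Ω`: `g ≥ 0` and off a null set `N`,
`|u(z) - u(w)| ≤ d(z,w)(g(z) + g(w))` for all `z, w ∈ Ω`. -/
def HajlaszGrad {X : Type*} [MetricSpace X] [MeasurableSpace X]
    (μ : Measure X) (Ω : Set X) (u g : X → ℝ) : Prop :=
  (∀ z, 0 ≤ g z) ∧ ∃ N : Set X, μ N = 0 ∧
    ∀ z ∈ Ω \ N, ∀ w ∈ Ω \ N, |u z - u w| ≤ dist z w * (g z + g w)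

/-- `f ∈ L^p(Ω, μ)` (with respect to the exponent `p` as a real power). -/
def MemLpOn {X : Type*} [MetricSpace X] [MeasurableSpace X]
    (μ : Measure X) (Ω : Set X) (f : X → ℝ) (p : ℝ) : Prop :=
  ∫⁻ z in Ω, ENNReal.ofReal (|f z| ^ p) ∂μ < ⊤

private lemma min1_lip (a b : ℝ) : |min 1 a - min 1 b| ≤ |a - b| := by
  calc |min 1 a - min 1 b| ≤ max |(1:ℝ) - 1| |a - b| := abs_min_sub_min_le_max 1 a 1 b
    _ = |a - b| := by rw [sub_self, abs_zero, max_eq_right (abs_nonneg _)]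

private lemma cutoff_lip {c : ℝ} (hc : 0 ≤ c) (R t₁ t₂ : ℝ) :
    |max 0 (min 1 ((R - t₁) * c)) - max 0 (min 1 ((R - t₂) * c))| ≤ c * |t₁ - t₂| := by
  calc |max 0 (min 1 ((R - t₁) * c)) - max 0 (min 1 ((R - t₂) * c))|
      = |max (min 1 ((R - t₁) * c)) 0 - max (min 1 ((R - t₂) * c)) 0| := by
        rw [max_comm, max_comm (0:ℝ) (min 1 ((R - t₂) * c))]
    _ ≤ |min 1 ((R - t₁) * c) - min 1 ((R - t₂) * c)| := abs_max_sub_max_le_abs _ _ _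
    _ ≤ |(R - t₁) * c - (R - t₂) * c| := min1_lip _ _
    _ = c * |t₁ - t₂| := by
        rw [← sub_mul, show R - t₁ - (R - t₂) = -(t₁ - t₂) by ring, abs_mul, abs_neg,
          abs_of_nonneg hc, mul_comm]

private lemma real_simp {C r s p n a c : ℝ} (hn : 0 < n) (hr : 0 < r) (hc : 0 ≤ c)
    (ha : 0 ≤ a) (hp : 0 < p) :
    C * (n / r ^ s) ^ (1/p) * (r * (n⁻¹ * (c ^ p * a)) ^ (1/p) + (n⁻¹ * a) ^ (1/p)) =
      C * (r * c + 1) * (a / r ^ s) ^ (1/p) := by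
  have hrs : (0:ℝ) < r ^ s := Real.rpow_pos_of_pos hr s
  have hcp : (0:ℝ) ≤ c ^ p := Real.rpow_nonneg hc p
  have h1 : (n / r ^ s) ^ (1/p) * (n⁻¹ * (c ^ p * a)) ^ (1/p) = c * (a / r ^ s) ^ (1/p) := by
    rw [← Real.mul_rpow (by positivity) (by positivity)]
    rw [show n / r ^ s * (n⁻¹ * (c ^ p * a)) = c ^ p * (a / r ^ s) by
      field_simp]
    rw [Real.mul_rpow hcp (by positivity), ← Real.rpow_mul hc,
      mul_one_div, div_self hp.ne', Real.rpow_one]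
  have h2 : (n / r ^ s) ^ (1/p) * (n⁻¹ * a) ^ (1/p) = (a / r ^ s) ^ (1/p) := by
    rw [← Real.mul_rpow (by positivity) (by positivity)]
    congr 1
    field_simp
  calc C * (n / r ^ s) ^ (1/p) * (r * (n⁻¹ * (c ^ p * a)) ^ (1/p) + (n⁻¹ * a) ^ (1/p))
      = C * (r * ((n / r ^ s) ^ (1/p) * (n⁻¹ * (c ^ p * a)) ^ (1/p)) +
          (n / r ^ s) ^ (1/p) * (n⁻¹ * a) ^ (1/p)) := by ring
    _ = C * (r * (c * (a / r ^ s) ^ (1/p)) + (a / r ^ s) ^ (1/p)) := by rw [h1, h2]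
    _ = C * (r * c + 1) * (a / r ^ s) ^ (1/p) := by ring

set_option maxHeartbeats 1600000 in
theorem stmt10 {X : Type*} [MetricSpace X] [MeasurableSpace X] [BorelSpace X]
    (μ : Measure X)
    (hμ : ∀ (x : X) (r : ℝ), 0 < r → 0 < μ (ball x r) ∧ μ (ball x r) < ⊤)
    {σ s p C_S : ℝ} (hσ : 1 ≤ σ) (hp : 0 < p) (hps : p < s) (hC : 0 < C_S)
    (hSob : ∀ (x₀ : X) (R₀ : ℝ), 0 < R₀ →
      ENNReal.ofReal R₀ ≤ EMetric.diam (univ : Set X) →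
      ∀ u g : X → ℝ, HajlaszGrad μ (ball x₀ (σ * R₀)) u g →
        MemLpOn μ (ball x₀ (σ * R₀)) u p → MemLpOn μ (ball x₀ (σ * R₀)) g p →
        ((μ (ball x₀ R₀))⁻¹ *
            ∫⁻ z in ball x₀ R₀, ENNReal.ofReal (|u z| ^ (s * p / (s - p))) ∂μ) ^
              ((s - p) / (s * p)) ≤
          ENNReal.ofReal C_S *
            (μ (ball x₀ (σ * R₀)) / ENNReal.ofReal (R₀ ^ s)) ^ (1 / p) *
            (ENNReal.ofReal R₀ *
                ((μ (ball x₀ (σ * R₀)))⁻¹ *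
                  ∫⁻ z in ball x₀ (σ * R₀), ENNReal.ofReal (g z ^ p) ∂μ) ^ (1 / p) +
              ((μ (ball x₀ (σ * R₀)))⁻¹ *
                  ∫⁻ z in ball x₀ (σ * R₀), ENNReal.ofReal (|u z| ^ p) ∂μ) ^ (1 / p))) :
    ∀ (x : X) (r : ℝ), 0 < r → ENNReal.ofReal r ≤ EMetric.diam (univ : Set X) →
      ENNReal.ofReal (2 ^ (-s) * (8 * C_S) ^ (-p) * r ^ s) ≤ μ (ball x r) := by
  intro x r hr hdiam
  have hs : 0 < s := hp.trans hps
  have hsp : 0 < s - p := sub_pos.2 hps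
  have hσ0 : (0:ℝ) < σ := lt_of_lt_of_le one_pos hσ
  have hσr : 0 < σ * r := mul_pos hσ0 hr
  -- radii
  set rj : ℕ → ℝ := fun j => ((2:ℝ)⁻¹ ^ (j+1) + 2⁻¹) * r with hrj_def
  have hrj_pos : ∀ j, 0 < rj j := by
    intro j
    have : (0:ℝ) < (2:ℝ)⁻¹ ^ (j+1) + 2⁻¹ := by positivity
    exact mul_pos this hr
  have hrj_le : ∀ j, rj j ≤ r := by
    intro j
    have h1 : (2:ℝ)⁻¹ ^ (j+1) + 2⁻¹ ≤ 1 := by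
      have h2 : (2:ℝ)⁻¹ ^ (j+1) ≤ (2:ℝ)⁻¹ ^ 1 :=
        pow_le_pow_of_le_one (by norm_num) (by norm_num) (by omega)
      rw [pow_one] at h2
      linarith
    calc rj j = ((2:ℝ)⁻¹ ^ (j+1) + 2⁻¹) * r := rfl
      _ ≤ 1 * r := mul_le_mul_of_nonneg_right h1 hr.le
      _ = r := one_mul r
  have hrj0 : rj 0 = r := by norm_num [hrj_def]
  have hrj_half : ∀ j, r / 2 ≤ rj j := by
    intro j
    have h1 : (2:ℝ)⁻¹ ≤ (2:ℝ)⁻¹ ^ (j+1) + 2⁻¹ :=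
      le_add_of_nonneg_left (by positivity)
    calc r / 2 = 2⁻¹ * r := by ring
      _ ≤ ((2:ℝ)⁻¹ ^ (j+1) + 2⁻¹) * r := mul_le_mul_of_nonneg_right h1 hr.le
      _ = rj j := rfl
  -- Lipschitz constants
  set cc : ℕ → ℝ := fun j => 2 ^ (j+2) / r with hcc_def
  have hcc_pos : ∀ j, 0 < cc j := by
    intro j
    have : (0:ℝ) < 2 ^ (j+2) := by positivity
    exact div_pos this hr
  have hgap : ∀ j, (rj j - rj (j+1)) * cc j = 1 := by
    intro j
    have h2 : ((2:ℝ)⁻¹ ^ (j+1+1) + 2⁻¹) = (2:ℝ)⁻¹ ^ (j+1) * 2⁻¹ + 2⁻¹ := by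
      rw [pow_succ]
    have hpow : (2:ℝ)⁻¹ ^ (j+1) = ((2:ℝ) ^ (j+1))⁻¹ := by rw [inv_pow]
    have h2j : (0:ℝ) < (2:ℝ) ^ (j+1) := by positivity
    simp only [hrj_def, hcc_def, h2, hpow]
    field_simp
    ring
  -- basic measures
  have hν0 := (hμ x (σ*r) hσr).1
  have hνt := (hμ x (σ*r) hσr).2
  have hA0 := (hμ x r hr).1
  have hAt := (hμ x r hr).2
  set a : ℕ → ℝ := fun j => (μ (ball x (rj j))).toReal with ha_def
  have hBj_t : ∀ j, μ (ball x (rj j)) ≠ ⊤ := fun j => (hμ x (rj j) (hrj_pos j)).2.ne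
  have ha_pos : ∀ j, 0 < a j := by
    intro j
    exact ENNReal.toReal_pos (hμ x (rj j) (hrj_pos j)).1.ne' (hBj_t j)
  have ha0 : a 0 = (μ (ball x r)).toReal := by
    show (μ (ball x (rj 0))).toReal = _
    rw [hrj0]
  -- the key real inequality for each j
  have keyR : ∀ j : ℕ,
      ((a 0)⁻¹ * a (j+1)) ^ ((s - p) / (s * p)) ≤
        C_S * (r * cc j + 1) * (a j / r ^ s) ^ (1/p) := by
    intro j
    set u : X → ℝ := fun z => max 0 (min 1 ((rj j - dist z x) * cc j)) with hu_def
    set g : X → ℝ := fun z => if dist z x < rj j then cc j else 0 with hg_def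
    have hu_nonneg : ∀ z, 0 ≤ u z := fun z => le_max_left _ _
    have hu_le_one : ∀ z, u z ≤ 1 := fun z =>
      max_le (by norm_num) (min_le_left _ _)
    have hu_zero : ∀ z, ¬ dist z x < rj j → u z = 0 := by
      intro z hz
      have h1 : (rj j - dist z x) * cc j ≤ 0 :=
        mul_nonpos_of_nonpos_of_nonneg (by linarith [not_lt.mp hz]) (hcc_pos j).le
      have : min 1 ((rj j - dist z x) * cc j) ≤ 0 := le_trans (min_le_right _ _) h1
      simp only [hu_def]
      exact max_eq_left this
    have hu_one : ∀ z, dist z x < rj (j+1) → u z = 1 := by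
      intro z hz
      have h1 : 1 ≤ (rj j - dist z x) * cc j := by
        have := hgap j
        have h2 : rj j - rj (j+1) ≤ rj j - dist z x := by linarith
        nlinarith [hcc_pos j]
      have : min 1 ((rj j - dist z x) * cc j) = 1 := min_eq_left h1
      simp only [hu_def, this]
      exact max_eq_right (by norm_num)
    have hg_nonneg : ∀ z, 0 ≤ g z := by
      intro z
      simp only [hg_def]
      split_ifs
      · exact (hcc_pos j).le
      · exact le_refl 0
    -- Hajlasz gradient
    have hHaj : HajlaszGrad μ (ball x (σ*r)) u g := by
      refine ⟨hg_nonneg, ∅, measure_empty, fun z _ w _ => ?_⟩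
      · have lip : |u z - u w| ≤ cc j * dist z w := by
          calc |u z - u w| ≤ cc j * |dist z x - dist w x| :=
            cutoff_lip (hcc_pos j).le (rj j) (dist z x) (dist w x)
          _ ≤ cc j * dist z w :=
            mul_le_mul_of_nonneg_left (abs_dist_sub_le z w x) (hcc_pos j).le
        by_cases hz : dist z x < rj j
        · have hgz : g z = cc j := if_pos hz
          calc |u z - u w| ≤ cc j * dist z w := lip
            _ ≤ dist z w * (g z + g w) := by
                rw [hgz]
                nlinarith [dist_nonneg (x := z) (y := w), hg_nonneg w, hg_nonneg z, hcc_pos j]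
        · by_cases hw : dist w x < rj j
          · have hgw : g w = cc j := if_pos hw
            calc |u z - u w| ≤ cc j * dist z w := lip
              _ ≤ dist z w * (g z + g w) := by
                  rw [hgw]
                  nlinarith [dist_nonneg (x := z) (y := w), hg_nonneg w, hg_nonneg z, hcc_pos j]
          · rw [hu_zero z hz, hu_zero w hw, sub_self, abs_zero]
            have := hg_nonneg z
            have := hg_nonneg w
            positivity
    -- integrability of u
    have hMu : MemLpOn μ (ball x (σ*r)) u p := by
      unfold MemLpOn
      calc ∫⁻ z in ball x (σ*r), ENNReal.ofReal (|u z| ^ p) ∂μ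
          ≤ ∫⁻ _ in ball x (σ*r), 1 ∂μ := by
            refine lintegral_mono fun z => ?_
            refine ENNReal.ofReal_le_one.mpr (Real.rpow_le_one (abs_nonneg _) ?_ hp.le)
            rw [abs_of_nonneg (hu_nonneg z)]
            exact hu_le_one z
        _ = μ (ball x (σ*r)) := by rw [setLIntegral_const]; rw [one_mul]
        _ < ⊤ := hνt
    -- integrability of g
    have hMg : MemLpOn μ (ball x (σ*r)) g p := by
      unfold MemLpOn
      calc ∫⁻ z in ball x (σ*r), ENNReal.ofReal (|g z| ^ p) ∂μ
          ≤ ∫⁻ _ in ball x (σ*r), ENNReal.ofReal (cc j ^ p) ∂μ := by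
            refine lintegral_mono fun z => ?_
            refine ENNReal.ofReal_le_ofReal (Real.rpow_le_rpow (abs_nonneg _) ?_ hp.le)
            simp only [hg_def]
            split_ifs
            · rw [abs_of_nonneg (hcc_pos j).le]
            · rw [abs_zero]; exact (hcc_pos j).le
        _ = ENNReal.ofReal (cc j ^ p) * μ (ball x (σ*r)) := setLIntegral_const _ _
        _ < ⊤ := ENNReal.mul_lt_top ENNReal.ofReal_lt_top hνt
    have hsob := hSob x r hr hdiam u g hHaj hMu hMg
    -- lower bound for LHS integral
    have hLj : μ (ball x (rj (j+1))) ≤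
        ∫⁻ z in ball x r, ENNReal.ofReal (|u z| ^ (s * p / (s - p))) ∂μ := by
      have heq : ∫⁻ z in ball x (rj (j+1)), ENNReal.ofReal (|u z| ^ (s * p / (s - p))) ∂μ
          = μ (ball x (rj (j+1))) := by
        calc ∫⁻ z in ball x (rj (j+1)), ENNReal.ofReal (|u z| ^ (s * p / (s - p))) ∂μ
            = ∫⁻ _ in ball x (rj (j+1)), (1:ℝ≥0∞) ∂μ :=
              setLIntegral_congr_fun measurableSet_ball
                (fun z (hz : z ∈ ball x (rj (j+1))) => by
                  rw [hu_one z (mem_ball.mp hz), abs_one, Real.one_rpow, ENNReal.ofReal_one])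
          _ = μ (ball x (rj (j+1))) := by rw [setLIntegral_const, one_mul]
      rw [← heq]
      exact lintegral_mono_set (ball_subset_ball (hrj_le (j+1)))
    -- upper bound for g integral
    have hGj : ∫⁻ z in ball x (σ*r), ENNReal.ofReal (g z ^ p) ∂μ ≤
        ENNReal.ofReal (cc j ^ p) * μ (ball x (rj j)) := by
      have h1 : ∀ z, ENNReal.ofReal (g z ^ p) =
          (ball x (rj j)).indicator (fun _ => ENNReal.ofReal (cc j ^ p)) z := by
        intro z
        by_cases hz : z ∈ ball x (rj j)
        · rw [indicator_of_mem hz]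
          simp only [hg_def]
          rw [if_pos (mem_ball.mp hz)]
        · rw [indicator_of_notMem hz]
          simp only [hg_def]
          rw [if_neg (fun h => hz (mem_ball.mpr h)), Real.zero_rpow hp.ne', ENNReal.ofReal_zero]
      calc ∫⁻ z in ball x (σ*r), ENNReal.ofReal (g z ^ p) ∂μ
          ≤ ∫⁻ z, ENNReal.ofReal (g z ^ p) ∂μ := setLIntegral_le_lintegral _ _
        _ = ∫⁻ z, (ball x (rj j)).indicator (fun _ => ENNReal.ofReal (cc j ^ p)) z ∂μ := by
            exact lintegral_congr h1
        _ = ∫⁻ _ in ball x (rj j), ENNReal.ofReal (cc j ^ p) ∂μ :=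
            lintegral_indicator measurableSet_ball _
        _ = ENNReal.ofReal (cc j ^ p) * μ (ball x (rj j)) := setLIntegral_const _ _
    -- upper bound for u integral
    have hUj : ∫⁻ z in ball x (σ*r), ENNReal.ofReal (|u z| ^ p) ∂μ ≤ μ (ball x (rj j)) := by
      have h1 : ∀ z, ENNReal.ofReal (|u z| ^ p) ≤
          (ball x (rj j)).indicator (fun _ => (1:ℝ≥0∞)) z := by
        intro z
        by_cases hz : z ∈ ball x (rj j)
        · rw [indicator_of_mem hz]
          refine ENNReal.ofReal_le_one.mpr (Real.rpow_le_one (abs_nonneg _) ?_ hp.le)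
          rw [abs_of_nonneg (hu_nonneg z)]
          exact hu_le_one z
        · rw [hu_zero z (fun h => hz (mem_ball.mpr h)), abs_zero, Real.zero_rpow hp.ne',
            ENNReal.ofReal_zero]
          exact zero_le
      calc ∫⁻ z in ball x (σ*r), ENNReal.ofReal (|u z| ^ p) ∂μ
          ≤ ∫⁻ z, ENNReal.ofReal (|u z| ^ p) ∂μ := setLIntegral_le_lintegral _ _
        _ ≤ ∫⁻ z, (ball x (rj j)).indicator (fun _ => (1:ℝ≥0∞)) z ∂μ := lintegral_mono h1
        _ = ∫⁻ _ in ball x (rj j), (1:ℝ≥0∞) ∂μ := lintegral_indicator measurableSet_ball _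
        _ = μ (ball x (rj j)) := by rw [setLIntegral_const, one_mul]
    -- the ENNReal inequality
    have hENN : ((μ (ball x r))⁻¹ * μ (ball x (rj (j+1)))) ^ ((s - p) / (s * p)) ≤
        ENNReal.ofReal C_S * (μ (ball x (σ*r)) / ENNReal.ofReal (r ^ s)) ^ (1/p) *
          (ENNReal.ofReal r *
              ((μ (ball x (σ*r)))⁻¹ * (ENNReal.ofReal (cc j ^ p) * μ (ball x (rj j)))) ^ (1/p) +
            ((μ (ball x (σ*r)))⁻¹ * μ (ball x (rj j))) ^ (1/p)) := by
      refine le_trans (le_trans ?_ hsob) ?_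
      · exact ENNReal.rpow_le_rpow (mul_le_mul_right hLj _) (by positivity)
      · gcongr
    -- finiteness of the RHS
    have hrs_pos : (0:ℝ) < r ^ s := Real.rpow_pos_of_pos hr s
    have hRne : ENNReal.ofReal C_S * (μ (ball x (σ*r)) / ENNReal.ofReal (r ^ s)) ^ (1/p) *
          (ENNReal.ofReal r *
              ((μ (ball x (σ*r)))⁻¹ * (ENNReal.ofReal (cc j ^ p) * μ (ball x (rj j)))) ^ (1/p) +
            ((μ (ball x (σ*r)))⁻¹ * μ (ball x (rj j))) ^ (1/p)) ≠ ⊤ := by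
      have hinv : (μ (ball x (σ*r)))⁻¹ ≠ ⊤ := ENNReal.inv_ne_top.mpr hν0.ne'
      have hdiv : μ (ball x (σ*r)) / ENNReal.ofReal (r ^ s) ≠ ⊤ :=
        (ENNReal.div_lt_top hνt.ne (ENNReal.ofReal_pos.mpr hrs_pos).ne').ne
      refine ENNReal.mul_ne_top (ENNReal.mul_ne_top ENNReal.ofReal_ne_top
        (ENNReal.rpow_ne_top_of_nonneg (by positivity) hdiv)) (ENNReal.add_ne_top.mpr ⟨?_, ?_⟩)
      · exact ENNReal.mul_ne_top ENNReal.ofReal_ne_top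
          (ENNReal.rpow_ne_top_of_nonneg (by positivity)
            (ENNReal.mul_ne_top hinv (ENNReal.mul_ne_top ENNReal.ofReal_ne_top (hBj_t j))))
      · exact ENNReal.rpow_ne_top_of_nonneg (by positivity)
          (ENNReal.mul_ne_top hinv (hBj_t j))
    set nn : ℝ := (μ (ball x (σ*r))).toReal with hnn_def
    have hnn_pos : 0 < nn := ENNReal.toReal_pos hν0.ne' hνt.ne
    have eq1 : (ENNReal.ofReal C_S).toReal = C_S := ENNReal.toReal_ofReal hC.le
    have eq2 : ((μ (ball x (σ*r)) / ENNReal.ofReal (r ^ s)) ^ (1/p)).toReal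
        = (nn / r ^ s) ^ (1/p) := by
      simp only [hnn_def]
      rw [← ENNReal.toReal_rpow, ENNReal.toReal_div, ENNReal.toReal_ofReal hrs_pos.le]
    have eq3 : (ENNReal.ofReal r *
          ((μ (ball x (σ*r)))⁻¹ * (ENNReal.ofReal (cc j ^ p) * μ (ball x (rj j)))) ^ (1/p)).toReal
        = r * (nn⁻¹ * (cc j ^ p * a j)) ^ (1/p) := by
      simp only [hnn_def, ha_def]
      rw [ENNReal.toReal_mul, ENNReal.toReal_ofReal hr.le, ← ENNReal.toReal_rpow,
        ENNReal.toReal_mul, ENNReal.toReal_inv, ENNReal.toReal_mul,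
        ENNReal.toReal_ofReal (Real.rpow_nonneg (hcc_pos j).le p)]
    have eq4 : ((((μ (ball x (σ*r)))⁻¹ * μ (ball x (rj j)))) ^ (1/p)).toReal
        = (nn⁻¹ * a j) ^ (1/p) := by
      simp only [hnn_def, ha_def]
      rw [← ENNReal.toReal_rpow, ENNReal.toReal_mul, ENNReal.toReal_inv]
    have eq0 : ((((μ (ball x r))⁻¹ * μ (ball x (rj (j+1))))) ^ ((s - p) / (s * p))).toReal
        = ((a 0)⁻¹ * a (j+1)) ^ ((s - p) / (s * p)) := by
      simp only [ha_def, hrj0]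
      rw [← ENNReal.toReal_rpow, ENNReal.toReal_mul, ENNReal.toReal_inv]
    calc ((a 0)⁻¹ * a (j+1)) ^ ((s - p) / (s * p))
        = ((((μ (ball x r))⁻¹ * μ (ball x (rj (j+1))))) ^ ((s - p) / (s * p))).toReal :=
          eq0.symm
      _ ≤ (ENNReal.ofReal C_S * (μ (ball x (σ*r)) / ENNReal.ofReal (r ^ s)) ^ (1/p) *
          (ENNReal.ofReal r *
              ((μ (ball x (σ*r)))⁻¹ * (ENNReal.ofReal (cc j ^ p) * μ (ball x (rj j)))) ^ (1/p) +
            ((μ (ball x (σ*r)))⁻¹ * μ (ball x (rj j))) ^ (1/p))).toReal :=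
          ENNReal.toReal_mono hRne hENN
      _ = C_S * (nn / r ^ s) ^ (1/p) *
          ((ENNReal.ofReal r *
              ((μ (ball x (σ*r)))⁻¹ * (ENNReal.ofReal (cc j ^ p) * μ (ball x (rj j)))) ^ (1/p) +
            ((μ (ball x (σ*r)))⁻¹ * μ (ball x (rj j))) ^ (1/p)).toReal) := by
          rw [ENNReal.toReal_mul, ENNReal.toReal_mul, eq1, eq2]
      _ ≤ C_S * (nn / r ^ s) ^ (1/p) *
          ((ENNReal.ofReal r *
              ((μ (ball x (σ*r)))⁻¹ * (ENNReal.ofReal (cc j ^ p) * μ (ball x (rj j)))) ^ (1/p)).toReal +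
            ((((μ (ball x (σ*r)))⁻¹ * μ (ball x (rj j)))) ^ (1/p)).toReal) := by
          refine mul_le_mul_of_nonneg_left ENNReal.toReal_add_le ?_
          have h1 : (0:ℝ) ≤ (nn / r ^ s) ^ (1/p) := Real.rpow_nonneg (by positivity) _
          positivity
      _ = C_S * (nn / r ^ s) ^ (1/p) *
          (r * (nn⁻¹ * (cc j ^ p * a j)) ^ (1/p) + (nn⁻¹ * a j) ^ (1/p)) := by
          rw [eq3, eq4]
      _ = C_S * (r * cc j + 1) * (a j / r ^ s) ^ (1/p) :=
          real_simp hnn_pos hr (hcc_pos j).le (ha_pos j).le hp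
  -- pass to logarithms
  set lC : ℝ := Real.log C_S with hlC_def
  set l2 : ℝ := Real.log 2 with hl2_def
  set lr : ℝ := Real.log r with hlr_def
  set L : ℕ → ℝ := fun j => Real.log (a j) with hL_def
  set β : ℝ := (s - p) / s with hβ_def
  set A0 : ℝ := β * L 0 + p * lC + 3 * p * l2 - s * lr with hA0_def
  set κ : ℝ := p * l2 with hκ_def
  have hβ0 : 0 ≤ β := by positivity
  have hβ1 : β < 1 := by
    rw [hβ_def, div_lt_one hs]; linarith
  have hrc : ∀ j : ℕ, r * cc j = 2 ^ (j+2) := by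
    intro j
    simp only [hcc_def]
    field_simp
  have ITER : ∀ j : ℕ, β * L (j+1) - A0 - j * κ ≤ L j := by
    intro j
    have hkey := keyR j
    have ha0p := ha_pos 0
    have haj1p := ha_pos (j+1)
    have hajp := ha_pos j
    have hLpos : (0:ℝ) < ((a 0)⁻¹ * a (j+1)) ^ ((s - p) / (s * p)) := by
      positivity
    have hlog := Real.log_le_log hLpos hkey
    have h2j2 : (0:ℝ) < 2 ^ (j+2) := by positivity
    have hrcj : r * cc j + 1 = 2 ^ (j+2) + 1 := by rw [hrc j]
    have hRpos : (0:ℝ) < (a j / r ^ s) ^ (1/p) := by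
      have := ha_pos j
      have : (0:ℝ) < a j / r ^ s := div_pos (ha_pos j) (Real.rpow_pos_of_pos hr s)
      positivity
    -- expand the left log
    have hlhs : Real.log (((a 0)⁻¹ * a (j+1)) ^ ((s - p) / (s * p))) =
        (s - p) / (s * p) * (L (j+1) - L 0) := by
      rw [Real.log_rpow (by positivity : (0:ℝ) < (a 0)⁻¹ * a (j+1)),
        Real.log_mul (by positivity : ((a 0):ℝ)⁻¹ ≠ 0) (ha_pos (j+1)).ne',
        Real.log_inv]
      ring
    -- expand the right log
    have hrhs : Real.log (C_S * (r * cc j + 1) * (a j / r ^ s) ^ (1/p)) =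
        lC + Real.log (2 ^ (j+2) + 1) + (1/p) * (L j - s * lr) := by
      rw [hrcj, Real.log_mul (by positivity) hRpos.ne',
        Real.log_mul hC.ne' (by positivity),
        Real.log_rpow (div_pos (ha_pos j) (Real.rpow_pos_of_pos hr s)),
        Real.log_div (ha_pos j).ne' (Real.rpow_pos_of_pos hr s).ne',
        Real.log_rpow hr]
    have hlog2 : Real.log ((2:ℝ) ^ (j+2) + 1) ≤ ((j:ℝ) + 3) * l2 := by
      have h1 : (2:ℝ) ^ (j+2) + 1 ≤ 2 ^ (j+3) := by
        have : (2:ℝ) ^ (j+3) = 2 * 2 ^ (j+2) := by ring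
        have h2 : (1:ℝ) ≤ 2 ^ (j+2) := one_le_pow₀ (by norm_num)
        linarith
      calc Real.log ((2:ℝ) ^ (j+2) + 1) ≤ Real.log ((2:ℝ) ^ (j+3)) :=
        Real.log_le_log (by positivity) h1
      _ = ((j:ℝ) + 3) * l2 := by
          rw [Real.log_pow]; push_cast; ring
    rw [hlhs, hrhs] at hlog
    -- multiply through by p
    have hβe : β = p * ((s - p) / (s * p)) := by
      rw [hβ_def]; field_simp
    have hstep : (s - p) / (s * p) * (L (j+1) - L 0) ≤
        lC + ((j:ℝ) + 3) * l2 + (1/p) * (L j - s * lr) := by linarith [hlog, hlog2]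
    have hmul := mul_le_mul_of_nonneg_left hstep hp.le
    have e1 : p * ((s - p) / (s * p) * (L (j+1) - L 0)) = β * (L (j+1) - L 0) := by
      rw [hβe]; ring
    have e2 : p * (lC + ((j:ℝ) + 3) * l2 + (1/p) * (L j - s * lr)) =
        p * lC + p * ((j:ℝ) + 3) * l2 + (L j - s * lr) := by
      field_simp
    have e3 : β * (L (j+1) - L 0) = β * L (j+1) - β * L 0 := by ring
    rw [e1, e2, e3] at hmul
    simp only [hA0_def, hκ_def]
    linarith [hmul]
  -- the induction
  have ind : ∀ n : ℕ, β ^ n * L n - A0 * (∑ k ∈ Finset.range n, β ^ k) -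
      κ * (∑ k ∈ Finset.range n, (k:ℝ) * β ^ k) ≤ L 0 := by
    intro n
    induction n with
    | zero => simp
    | succ n ih =>
      have h1 := ITER n
      have h2 : β ^ n * (β * L (n+1) - A0 - n * κ) ≤ β ^ n * L n :=
        mul_le_mul_of_nonneg_left h1 (pow_nonneg hβ0 n)
      have h3 : β ^ n * (β * L (n+1) - A0 - n * κ) =
          β ^ (n+1) * L (n+1) - A0 * β ^ n - κ * ((n:ℝ) * β ^ n) := by ring
      rw [Finset.sum_range_succ, Finset.sum_range_succ]
      linarith [h2, h3 ▸ h2, ih]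
  -- lower bound for L n
  have hm_pos : (0:ℝ) < (μ (ball x (r/2))).toReal := by
    refine ENNReal.toReal_pos (hμ x (r/2) (by linarith)).1.ne' ?_
    exact ((measure_mono (ball_subset_ball (by linarith))).trans_lt hAt).ne
  set Lm : ℝ := Real.log (μ (ball x (r/2))).toReal with hLm_def
  have hLm : ∀ n, Lm ≤ L n := by
    intro n
    refine Real.log_le_log hm_pos (ENNReal.toReal_mono (hBj_t n) ?_)
    exact measure_mono (ball_subset_ball (hrj_half n))
  have ind2 : ∀ n : ℕ, β ^ n * Lm - A0 * (∑ k ∈ Finset.range n, β ^ k) -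
      κ * (∑ k ∈ Finset.range n, (k:ℝ) * β ^ k) ≤ L 0 := by
    intro n
    have h1 : β ^ n * Lm ≤ β ^ n * L n :=
      mul_le_mul_of_nonneg_left (hLm n) (pow_nonneg hβ0 n)
    linarith [ind n]
  -- take limits
  have hgeo : Tendsto (fun n => ∑ k ∈ Finset.range n, β ^ k) atTop (nhds (1 - β)⁻¹) :=
    (hasSum_geometric_of_lt_one hβ0 hβ1).tendsto_sum_nat
  have hgeo2 : Tendsto (fun n => ∑ k ∈ Finset.range n, (k:ℝ) * β ^ k) atTop
      (nhds (β / (1 - β) ^ 2)) :=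
    (hasSum_coe_mul_geometric_of_norm_lt_one
      (by rwa [Real.norm_eq_abs, abs_of_nonneg hβ0])).tendsto_sum_nat
  have hpow : Tendsto (fun n => β ^ n * Lm) atTop (nhds 0) := by
    have := (tendsto_pow_atTop_nhds_zero_of_lt_one hβ0 hβ1).mul_const Lm
    simpa using this
  have hlim : Tendsto (fun n => β ^ n * Lm - A0 * (∑ k ∈ Finset.range n, β ^ k) -
      κ * (∑ k ∈ Finset.range n, (k:ℝ) * β ^ k)) atTop
      (nhds (0 - A0 * (1 - β)⁻¹ - κ * (β / (1 - β) ^ 2))) :=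
    (hpow.sub (hgeo.const_mul A0)).sub (hgeo2.const_mul κ)
  have hfin : 0 - A0 * (1 - β)⁻¹ - κ * (β / (1 - β) ^ 2) ≤ L 0 :=
    le_of_tendsto' hlim ind2
  -- final arithmetic
  have h1mb : 1 - β = p / s := by
    rw [hβ_def]; field_simp; ring
  have hid : 0 - A0 * (1 - β)⁻¹ - κ * (β / (1 - β) ^ 2) =
      (s/p) * (-p * lC + s * lr - (2*p+s) * l2) - ((s-p)/p) * L 0 := by
    rw [h1mb, hA0_def, hκ_def, hβ_def]
    field_simp
    ring
  rw [hid] at hfin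
  have hsum : L 0 + ((s-p)/p) * L 0 = (s/p) * L 0 := by
    field_simp
    ring
  have hfin2 : (s/p) * (-p * lC + s * lr - (2*p+s) * l2) ≤ (s/p) * L 0 := by linarith
  have hG : -p * lC + s * lr - (2*p+s) * l2 ≤ L 0 :=
    le_of_mul_le_mul_left (by linarith [hfin2]) (by positivity : (0:ℝ) < s/p)
  -- convert back from logs
  have hexp : C_S ^ (-p) * r ^ s * 2 ^ (-(2*p+s)) ≤ a 0 := by
    have h1 : C_S ^ (-p) * r ^ s * 2 ^ (-(2*p+s)) =
        Real.exp (-p * lC + s * lr - (2*p+s) * l2) := by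
      rw [Real.rpow_def_of_pos hC, Real.rpow_def_of_pos hr, Real.rpow_def_of_pos two_pos,
        ← Real.exp_add, ← Real.exp_add]
      congr 1
      simp only [hlC_def, hlr_def, hl2_def]
      ring
    rw [h1]
    calc Real.exp (-p * lC + s * lr - (2*p+s) * l2) ≤ Real.exp (L 0) := Real.exp_le_exp.mpr hG
      _ = a 0 := Real.exp_log (ha_pos 0)
  -- compare the constants
  have hcomp : 2 ^ (-s) * (8 * C_S) ^ (-p) * r ^ s ≤ C_S ^ (-p) * r ^ s * 2 ^ (-(2*p+s)) := by
    have h8 : ((8:ℝ)) ^ (-p) = (2:ℝ) ^ (-(3*p)) := by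
      rw [show ((8:ℝ)) = (2:ℝ) ^ ((3:ℕ):ℝ) by rw [Real.rpow_natCast]; norm_num]
      rw [← Real.rpow_mul (by norm_num)]
      ring_nf
    have hmulsplit : ((8:ℝ) * C_S) ^ (-p) = (8:ℝ) ^ (-p) * C_S ^ (-p) :=
      Real.mul_rpow (by norm_num) hC.le
    have h2pow : (2:ℝ) ^ (-s) * (2:ℝ) ^ (-(3*p)) = (2:ℝ) ^ (-s - 3*p) := by
      rw [← Real.rpow_add two_pos]; ring_nf
    have h2le : (2:ℝ) ^ (-s - 3*p) ≤ (2:ℝ) ^ (-(2*p+s)) :=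
      (Real.rpow_le_rpow_left_iff (by norm_num)).mpr (by linarith)
    calc 2 ^ (-s) * (8 * C_S) ^ (-p) * r ^ s
        = ((2:ℝ) ^ (-s) * (2:ℝ) ^ (-(3*p))) * (C_S ^ (-p) * r ^ s) := by
          rw [hmulsplit, h8]; ring
      _ = (2:ℝ) ^ (-s - 3*p) * (C_S ^ (-p) * r ^ s) := by rw [h2pow]
      _ ≤ (2:ℝ) ^ (-(2*p+s)) * (C_S ^ (-p) * r ^ s) := by
          refine mul_le_mul_of_nonneg_right h2le ?_
          positivity
      _ = C_S ^ (-p) * r ^ s * 2 ^ (-(2*p+s)) := by ring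
  refine ENNReal.ofReal_le_of_le_toReal ?_
  rw [← ha0] at *
  calc 2 ^ (-s) * (8 * C_S) ^ (-p) * r ^ s ≤ C_S ^ (-p) * r ^ s * 2 ^ (-(2*p+s)) := hcomp
    _ ≤ a 0 := hexp
end

section
/- (Relative Sobolev embedding implies relative lower volume decay.) Let (X,d,μ) be a metric-measure space, σ ≥ 1, 0 < p < s, p* = sp/(s−p). Suppose there is C_S > 0 such that for every ball B_0 = B(x_0,R_0), R_0 ∈ (0,∞), one has (⨍_{B_0}|u|^{p*}dμ)^{1/p*} ≤ C_S R_0 (⨍_{σB_0}g^p dμ)^{1/p} + C_S (⨍_{σB_0}|u|^p dμ)^{1/p} for all u ∈ M^{1,p}(σB_0,d,μ), g ∈ D(u). Then μ(B(x,r))/μ(B(y,R)) ≥ (8C_S)^{−s} 2^{−s²/p} (r/R)^s whenever B(x,r) ⊆ B(y,R) and 0 < r ≤ R < ∞. In particular μ is doubling. -/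
open Metric MeasureTheory Set

lemma clamp_mono {u v : ℝ} (huv : u ≤ v) :
    max 0 (min 1 u) ≤ max 0 (min 1 v) :=
  max_le_max le_rfl (min_le_min le_rfl huv)

lemma clamp_sub_le {u v : ℝ} (huv : u ≤ v) :
    max 0 (min 1 v) - max 0 (min 1 u) ≤ v - u := by
  rcases le_or_gt (min 1 v) 0 with h4 | h4
  · have hv : max 0 (min 1 v) = 0 := max_eq_left h4
    have h0 : 0 ≤ max 0 (min 1 u) := le_max_left _ _
    linarith
  · have hv : max 0 (min 1 v) = min 1 v := max_eq_right h4.le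
    rcases le_or_gt (min 1 u) 0 with h3 | h3
    · have hu : max 0 (min 1 u) = 0 := max_eq_left h3
      have hu0 : u ≤ 0 := by
        rcases min_choice (1:ℝ) u with hc | hc
        · rw [hc] at h3; linarith
        · rw [hc] at h3; exact h3
      have hle : min 1 v ≤ v := min_le_right _ _
      rw [hv, hu]; linarith
    · have hu : max 0 (min 1 u) = min 1 u := max_eq_right h3.le
      rcases le_total (1:ℝ) u with h1 | h1
      · have e1 : min 1 u = 1 := min_eq_left h1
        have e2 : min 1 v = 1 := min_eq_left (le_trans h1 huv)
        rw [hv, hu, e1, e2]; linarith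
      · have e1 : min 1 u = u := min_eq_right h1
        have hle : min 1 v ≤ v := min_le_right _ _
        rw [hv, hu, e1]; linarith

lemma clamp_lip (a b : ℝ) : |max 0 (min 1 a) - max 0 (min 1 b)| ≤ |a - b| := by
  rcases le_total a b with h | h
  · rw [abs_sub_comm (max 0 (min 1 a)) _, abs_of_nonneg (by linarith [clamp_mono h]),
      abs_of_nonpos (show a - b ≤ 0 by linarith)]
    have := clamp_sub_le h; linarith
  · rw [abs_of_nonneg (by linarith [clamp_mono h]),
      abs_of_nonneg (show (0:ℝ) ≤ a - b by linarith)]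
    have := clamp_sub_le h; linarith

lemma iterate_lower (q c1 c2 m : ℝ) (xs : ℕ → ℝ) (hq0 : 0 < q) (hq1 : q < 1)
    (hrec : ∀ j : ℕ, q * xs (j+1) - c1 - c2 * j ≤ xs j)
    (hlb : ∀ n, m ≤ xs n) :
    -(c1 / (1 - q) + c2 * q / (1 - q)^2) ≤ xs 0 := by
  set S : ℕ → ℝ := fun n => ∑ j ∈ Finset.range n, q ^ j * (c1 + c2 * j) with hSdef
  have hstep : ∀ n, q ^ n * xs n - S n ≤ xs 0 := by
    intro n; induction n with
    | zero => simp [S]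
    | succ n ih =>
      refine le_trans ?_ ih
      have h := hrec n
      have hqn : (0:ℝ) ≤ q ^ n := by positivity
      have hmul : q ^ n * (q * xs (n+1) - c1 - c2 * n) ≤ q ^ n * xs n :=
        mul_le_mul_of_nonneg_left h hqn
      have hS : S (n+1) = S n + q ^ n * (c1 + c2 * n) := Finset.sum_range_succ _ _
      calc q^(n+1) * xs (n+1) - S (n+1)
          = q^n * (q * xs (n+1) - c1 - c2*n) - S n := by rw [hS]; ring
        _ ≤ q^n * xs n - S n := by linarith
  have hlow : ∀ n, q ^ n * m - S n ≤ xs 0 := by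
    intro n
    refine le_trans ?_ (hstep n)
    have : q^n * m ≤ q^n * xs n := mul_le_mul_of_nonneg_left (hlb n) (by positivity)
    linarith
  have hS1 : HasSum (fun j : ℕ => q ^ j * c1) ((1-q)⁻¹ * c1) :=
    (hasSum_geometric_of_lt_one hq0.le hq1).mul_right c1
  have hS2 : HasSum (fun j : ℕ => (j:ℝ) * q ^ j * c2) (q/(1-q)^2 * c2) :=
    (hasSum_coe_mul_geometric_of_norm_lt_one
      (by rw [Real.norm_eq_abs, abs_of_pos hq0]; exact hq1)).mul_right c2
  have hS3 : HasSum (fun j : ℕ => q ^ j * (c1 + c2 * j))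
      ((1-q)⁻¹ * c1 + q/(1-q)^2 * c2) := by
    have h := hS1.add hS2
    convert h using 1
    funext j; ring
  have hlim : Filter.Tendsto (fun n => q^n * m - S n) Filter.atTop
      (nhds (0 * m - ((1-q)⁻¹ * c1 + q/(1-q)^2 * c2))) :=
    ((tendsto_pow_atTop_nhds_zero_of_lt_one hq0.le hq1).mul_const m).sub
      hS3.tendsto_sum_nat
  have hfin := le_of_tendsto hlim (Filter.Eventually.of_forall hlow)
  have heq : -(c1 / (1 - q) + c2 * q / (1 - q)^2)
      = 0 * m - ((1-q)⁻¹ * c1 + q/(1-q)^2 * c2) := by ring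
  linarith

set_option maxHeartbeats 1600000 in
lemma vol_lower {X : Type*} [MetricSpace X] [MeasurableSpace X] [BorelSpace X]
    (μ : Measure X)
    (hμ : ∀ (x : X) (r : ℝ), 0 < r → 0 < μ (ball x r) ∧ μ (ball x r) < ⊤)
    {σ s p C_S : ℝ} (hσ : 1 ≤ σ) (hp : 0 < p) (hps : p < s) (hC : 0 < C_S)
    (hSob : ∀ (x₀ : X) (R₀ : ℝ), 0 < R₀ →
      ∀ u g : X → ℝ, HajlaszGrad μ (ball x₀ (σ * R₀)) u g →
        MemLpOn μ (ball x₀ (σ * R₀)) u p → MemLpOn μ (ball x₀ (σ * R₀)) g p →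
        ((μ (ball x₀ R₀))⁻¹ *
            ∫⁻ z in ball x₀ R₀, ENNReal.ofReal (|u z| ^ (s * p / (s - p))) ∂μ) ^
              ((s - p) / (s * p)) ≤
          ENNReal.ofReal C_S * ENNReal.ofReal R₀ *
              ((μ (ball x₀ (σ * R₀)))⁻¹ *
                ∫⁻ z in ball x₀ (σ * R₀), ENNReal.ofReal (g z ^ p) ∂μ) ^ (1 / p) +
            ENNReal.ofReal C_S *
              ((μ (ball x₀ (σ * R₀)))⁻¹ *
                ∫⁻ z in ball x₀ (σ * R₀), ENNReal.ofReal (|u z| ^ p) ∂μ) ^ (1 / p))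
    (x y : X) (r R : ℝ) (hr : 0 < r) (hrR : r ≤ R) (hsub : ball x r ⊆ ball y R) :
    ENNReal.ofReal ((8 * C_S) ^ (-s) * 2 ^ (-(s ^ 2) / p) * (r / R) ^ s) ≤
      μ (ball x r) / μ (ball y R) := by
  have hR : 0 < R := hr.trans_le hrR
  have hs : 0 < s := hp.trans hps
  have hsp : 0 < s - p := by linarith
  obtain ⟨hB0pos, hB0fin⟩ := hμ y R hR
  have hB0ne : μ (ball y R) ≠ 0 := hB0pos.ne'
  have hIfin : (μ (ball y R))⁻¹ ≠ ⊤ := ENNReal.inv_ne_top.mpr hB0ne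
  set ρ : ℕ → ℝ := fun j => (2⁻¹ + (2:ℝ)⁻¹ ^ (j+1)) * r with hρdef
  have hρpos : ∀ j, 0 < ρ j := by
    intro j; have : (0:ℝ) < 2⁻¹ + (2:ℝ)⁻¹ ^ (j+1) := by positivity
    exact mul_pos this hr
  have hρr : ∀ j, ρ j ≤ r := by
    intro j
    simp only [hρdef]
    have h1 : (2:ℝ)⁻¹ ^ (j+1) ≤ (2:ℝ)⁻¹ ^ 1 :=
      pow_le_pow_of_le_one (by norm_num) (by norm_num) (by omega)
    have : (2:ℝ)⁻¹ + (2:ℝ)⁻¹ ^ (j+1) ≤ 1 := by norm_num at h1 ⊢; linarith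
    nlinarith
  have hρhalf : ∀ j, r/2 ≤ ρ j := by
    intro j
    simp only [hρdef]
    have h1 : (0:ℝ) < (2:ℝ)⁻¹ ^ (j+1) := by positivity
    nlinarith
  have hρ0 : ρ 0 = r := by norm_num [hρdef]
  have hδeq : ∀ j, ρ j - ρ (j+1) = (2:ℝ)⁻¹^(j+2) * r := by
    intro j
    simp only [hρdef]
    rw [pow_succ ((2:ℝ)⁻¹) (j+1)]
    ring
  set a : ℕ → ℝ := fun j => (μ (ball x (ρ j))).toReal / (μ (ball y R)).toReal with hadef
  have haB : ∀ j, ((μ (ball y R))⁻¹ * μ (ball x (ρ j))).toReal = a j := by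
    intro j
    rw [ENNReal.toReal_mul, ENNReal.toReal_inv, inv_mul_eq_div]
  have ha_pos : ∀ j, 0 < a j := by
    intro j
    apply div_pos
    · exact ENNReal.toReal_pos (hμ x (ρ j) (hρpos j)).1.ne' (hμ x (ρ j) (hρpos j)).2.ne
    · exact ENNReal.toReal_pos hB0ne hB0fin.ne
  set A : ℝ := 8 * C_S * (R/r) with hAdef
  have hApos : 0 < A := by
    have : 0 < R / r := div_pos hR hr
    positivity
  -- key iteration step
  have hkey : ∀ j : ℕ, a (j+1) ^ ((s-p)/(s*p)) ≤ (A * 2^j) * a j ^ (1/p) := by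
    intro j
    set δ : ℝ := ρ j - ρ (j+1) with hδdef
    have hδpos : 0 < δ := by rw [hδdef, hδeq j]; positivity
    set L : ℝ := 2^(j+2)/r with hLdef
    have hLpos : 0 < L := by positivity
    have hLinv : L = δ⁻¹ := by
      rw [hδdef, hδeq j, hLdef, mul_inv, inv_pow, inv_inv, div_eq_mul_inv]
    set u : X → ℝ := fun z => max 0 (min 1 ((ρ j - dist z x)/δ)) with hudef
    set g : X → ℝ := fun z => if dist z x < ρ j then L else 0 with hgdef
    have hg_nonneg : ∀ z, 0 ≤ g z := by
      intro z; simp only [hgdef]; split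
      · exact hLpos.le
      · exact le_rfl
    have hu_nonneg : ∀ z, 0 ≤ u z := fun z => le_max_left _ _
    have hu_le_one : ∀ z, u z ≤ 1 := fun z => max_le (by norm_num) (min_le_left _ _)
    have hu0 : ∀ z, ρ j ≤ dist z x → u z = 0 := by
      intro z hz
      have h1 : (ρ j - dist z x)/δ ≤ 0 :=
        div_nonpos_of_nonpos_of_nonneg (by linarith) hδpos.le
      exact max_eq_left ((min_le_right _ _).trans h1)
    have hu1 : ∀ z, dist z x < ρ (j+1) → u z = 1 := by
      intro z hz
      have h1 : (1:ℝ) ≤ (ρ j - dist z x)/δ := by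
        rw [le_div_iff₀ hδpos, one_mul, hδdef]; linarith
      simp only [hudef]
      rw [min_eq_left h1]
      exact max_eq_right zero_le_one
    have hLip : ∀ z w, |u z - u w| ≤ dist z w * L := by
      intro z w
      have h1 := clamp_lip ((ρ j - dist z x)/δ) ((ρ j - dist w x)/δ)
      have h2 : (ρ j - dist z x)/δ - (ρ j - dist w x)/δ = (dist w x - dist z x)/δ := by
        ring
      have h3 : |dist w x - dist z x| ≤ dist z w := by
        rw [abs_sub_comm]; exact abs_dist_sub_le z w x
      calc |u z - u w| ≤ |(ρ j - dist z x)/δ - (ρ j - dist w x)/δ| := h1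
        _ = |dist w x - dist z x| / δ := by rw [h2, abs_div, abs_of_pos hδpos]
        _ ≤ dist z w / δ := (div_le_div_iff_of_pos_right hδpos).mpr h3
        _ = dist z w * L := by rw [hLinv, div_eq_mul_inv]
    have hHaj : HajlaszGrad μ (ball y (σ*R)) u g :=
      ⟨hg_nonneg, ∅, measure_empty, by
        intro z _ w _
        rcases lt_or_ge (dist z x) (ρ j) with hz | hz
        · have hgz : g z = L := if_pos hz
          calc |u z - u w| ≤ dist z w * L := hLip z w
            _ ≤ dist z w * (g z + g w) := by
                rw [hgz]
                exact mul_le_mul_of_nonneg_left (by linarith [hg_nonneg w]) dist_nonneg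
        · rcases lt_or_ge (dist w x) (ρ j) with hw | hw
          · have hgw : g w = L := if_pos hw
            calc |u z - u w| = |u w - u z| := abs_sub_comm _ _
              _ ≤ dist w z * L := hLip w z
              _ = dist z w * L := by rw [dist_comm]
              _ ≤ dist z w * (g z + g w) := by
                  rw [hgw]
                  exact mul_le_mul_of_nonneg_left (by linarith [hg_nonneg z]) dist_nonneg
          · rw [hu0 z hz, hu0 w hw, sub_zero, abs_zero]
            exact mul_nonneg dist_nonneg (by linarith [hg_nonneg z, hg_nonneg w])⟩
    have hσR : 0 < σ * R := by positivity
    have hσfin : μ (ball y (σ*R)) < ⊤ := (hμ y (σ*R) hσR).2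
    have hum : MemLpOn μ (ball y (σ*R)) u p := by
      unfold MemLpOn
      calc ∫⁻ z in ball y (σ*R), ENNReal.ofReal (|u z| ^ p) ∂μ
          ≤ ∫⁻ _ in ball y (σ*R), 1 ∂μ := by
            refine lintegral_mono fun z => ?_
            rw [show (1:ENNReal) = ENNReal.ofReal 1 by simp]
            exact ENNReal.ofReal_le_ofReal (Real.rpow_le_one (abs_nonneg _)
              (by rw [abs_of_nonneg (hu_nonneg z)]; exact hu_le_one z) hp.le)
        _ = μ (ball y (σ*R)) := by rw [setLIntegral_const, one_mul]
        _ < ⊤ := hσfin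
    have hgm : MemLpOn μ (ball y (σ*R)) g p := by
      unfold MemLpOn
      calc ∫⁻ z in ball y (σ*R), ENNReal.ofReal (|g z| ^ p) ∂μ
          ≤ ∫⁻ _ in ball y (σ*R), ENNReal.ofReal (L ^ p) ∂μ := by
            refine lintegral_mono fun z => ?_
            apply ENNReal.ofReal_le_ofReal
            apply Real.rpow_le_rpow (abs_nonneg _) ?_ hp.le
            rw [abs_of_nonneg (hg_nonneg z)]
            simp only [hgdef]; split
            · exact le_rfl
            · exact hLpos.le
        _ = ENNReal.ofReal (L ^ p) * μ (ball y (σ*R)) := setLIntegral_const _ _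
        _ < ⊤ := ENNReal.mul_lt_top ENNReal.ofReal_lt_top hσfin
    have hS := hSob y R hR u g hHaj hum hgm
    -- lower bound for the left-hand side
    have hBj1sub : ball x (ρ (j+1)) ⊆ ball y R :=
      (ball_subset_ball (hρr (j+1))).trans hsub
    have hLHS : μ (ball x (ρ (j+1))) ≤
        ∫⁻ z in ball y R, ENNReal.ofReal (|u z| ^ (s*p/(s-p))) ∂μ := by
      have hpt : ∀ z, (ball x (ρ (j+1))).indicator (fun _ => (1:ENNReal)) z ≤
          ENNReal.ofReal (|u z| ^ (s*p/(s-p))) := by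
        intro z
        by_cases hz : z ∈ ball x (ρ (j+1))
        · rw [Set.indicator_of_mem hz, hu1 z (mem_ball.mp hz)]
          simp
        · rw [Set.indicator_of_notMem hz]; exact zero_le
      calc μ (ball x (ρ (j+1)))
          = ∫⁻ z in ball y R, (ball x (ρ (j+1))).indicator (fun _ => (1:ENNReal)) z ∂μ := by
            rw [lintegral_indicator measurableSet_ball, setLIntegral_const,
              Measure.restrict_apply measurableSet_ball, one_mul,
              Set.inter_eq_self_of_subset_left hBj1sub]
        _ ≤ _ := lintegral_mono hpt
    -- upper bounds for the right-hand side integrals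
    have hIg : ∫⁻ z in ball y (σ*R), ENNReal.ofReal (g z ^ p) ∂μ ≤
        ENNReal.ofReal (L^p) * μ (ball x (ρ j)) := by
      have hpt : ∀ z, ENNReal.ofReal (g z ^ p) ≤
          (ball x (ρ j)).indicator (fun _ => ENNReal.ofReal (L^p)) z := by
        intro z
        simp only [hgdef]
        by_cases hz : dist z x < ρ j
        · rw [if_pos hz, Set.indicator_of_mem (mem_ball.mpr hz)]
        · rw [if_neg hz, Real.zero_rpow hp.ne', ENNReal.ofReal_zero]
          exact zero_le
      calc ∫⁻ z in ball y (σ*R), ENNReal.ofReal (g z ^ p) ∂μ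
          ≤ ∫⁻ z in ball y (σ*R),
              (ball x (ρ j)).indicator (fun _ => ENNReal.ofReal (L^p)) z ∂μ :=
            lintegral_mono hpt
        _ = ENNReal.ofReal (L^p) * μ (ball x (ρ j) ∩ ball y (σ*R)) := by
            rw [lintegral_indicator measurableSet_ball, setLIntegral_const,
              Measure.restrict_apply measurableSet_ball]
        _ ≤ ENNReal.ofReal (L^p) * μ (ball x (ρ j)) :=
            mul_le_mul_right (measure_mono inter_subset_left) _
    have hIu : ∫⁻ z in ball y (σ*R), ENNReal.ofReal (|u z| ^ p) ∂μ ≤ μ (ball x (ρ j)) := by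
      have hpt : ∀ z, ENNReal.ofReal (|u z| ^ p) ≤
          (ball x (ρ j)).indicator (fun _ => (1:ENNReal)) z := by
        intro z
        by_cases hz : dist z x < ρ j
        · rw [Set.indicator_of_mem (mem_ball.mpr hz)]
          rw [show (1:ENNReal) = ENNReal.ofReal 1 by simp]
          exact ENNReal.ofReal_le_ofReal (Real.rpow_le_one (abs_nonneg _)
            (by rw [abs_of_nonneg (hu_nonneg z)]; exact hu_le_one z) hp.le)
        · rw [hu0 z (not_lt.mp hz), abs_zero, Real.zero_rpow hp.ne', ENNReal.ofReal_zero]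
          exact zero_le
      calc ∫⁻ z in ball y (σ*R), ENNReal.ofReal (|u z| ^ p) ∂μ
          ≤ ∫⁻ z in ball y (σ*R), (ball x (ρ j)).indicator (fun _ => (1:ENNReal)) z ∂μ :=
            lintegral_mono hpt
        _ = μ (ball x (ρ j) ∩ ball y (σ*R)) := by
            rw [lintegral_indicator measurableSet_ball, setLIntegral_const,
              Measure.restrict_apply measurableSet_ball, one_mul]
        _ ≤ μ (ball x (ρ j)) := measure_mono inter_subset_left
    have hinv_mono : (μ (ball y (σ*R)))⁻¹ ≤ (μ (ball y R))⁻¹ :=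
      ENNReal.inv_le_inv' (measure_mono (ball_subset_ball (by nlinarith)))
    set V : ENNReal := ((μ (ball y R))⁻¹ * μ (ball x (ρ j))) ^ (1/p) with hVdef
    have hLp : ((L^p : ℝ))^(1/p) = L := by
      rw [← Real.rpow_mul hLpos.le, mul_one_div_cancel hp.ne', Real.rpow_one]
    have hterm1 : ENNReal.ofReal C_S * ENNReal.ofReal R *
        ((μ (ball y (σ*R)))⁻¹ *
          ∫⁻ z in ball y (σ*R), ENNReal.ofReal (g z ^ p) ∂μ) ^ (1/p) ≤
        ENNReal.ofReal (C_S * R * L) * V := by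
      have h1 : ((μ (ball y (σ*R)))⁻¹ *
          ∫⁻ z in ball y (σ*R), ENNReal.ofReal (g z ^ p) ∂μ) ^ (1/p) ≤
          ((μ (ball y R))⁻¹ * (ENNReal.ofReal (L^p) * μ (ball x (ρ j)))) ^ (1/p) :=
        ENNReal.rpow_le_rpow (mul_le_mul' hinv_mono hIg) (by positivity)
      have h2 : ((μ (ball y R))⁻¹ * (ENNReal.ofReal (L^p) * μ (ball x (ρ j)))) ^ (1/p)
          = ENNReal.ofReal L * V := by
        rw [mul_left_comm, ENNReal.mul_rpow_of_nonneg _ _ (by positivity : (0:ℝ) ≤ 1/p),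
          ENNReal.ofReal_rpow_of_pos (by positivity), hLp, hVdef]
      calc ENNReal.ofReal C_S * ENNReal.ofReal R *
          ((μ (ball y (σ*R)))⁻¹ *
            ∫⁻ z in ball y (σ*R), ENNReal.ofReal (g z ^ p) ∂μ) ^ (1/p)
          ≤ ENNReal.ofReal C_S * ENNReal.ofReal R * (ENNReal.ofReal L * V) := by
            rw [← h2]; exact mul_le_mul_right h1 _
        _ = ENNReal.ofReal (C_S * R * L) * V := by
            rw [ENNReal.ofReal_mul (by positivity), ENNReal.ofReal_mul hC.le]
            ring
    have hterm2 : ENNReal.ofReal C_S *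
        ((μ (ball y (σ*R)))⁻¹ *
          ∫⁻ z in ball y (σ*R), ENNReal.ofReal (|u z| ^ p) ∂μ) ^ (1/p) ≤
        ENNReal.ofReal C_S * V :=
      mul_le_mul_right (ENNReal.rpow_le_rpow (mul_le_mul' hinv_mono hIu) (by positivity)) _
    have hreal : C_S * R * L + C_S ≤ A * 2^j := by
      have hpow : (2:ℝ)^(j+2) = 2^j * 4 := by rw [pow_succ, pow_succ]; ring
      have h2j : (1:ℝ) ≤ 2^j := one_le_pow₀ (by norm_num)
      have hRr : 1 ≤ R/r := (one_le_div hr).mpr hrR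
      have e1 : C_S * R * L = 4*C_S*(R/r)*2^j := by
        rw [hLdef, hpow]; field_simp
      have h12 : 1 ≤ (R/r) * 2^j := by nlinarith
      have : C_S ≤ 4*C_S*((R/r)*2^j) := by nlinarith
      rw [e1, hAdef]; nlinarith
    have hstep1 : ((μ (ball y R))⁻¹ * μ (ball x (ρ (j+1)))) ^ ((s-p)/(s*p)) ≤
        ENNReal.ofReal (A * 2^j) * V := by
      calc ((μ (ball y R))⁻¹ * μ (ball x (ρ (j+1)))) ^ ((s-p)/(s*p))
          ≤ ((μ (ball y R))⁻¹ *
              ∫⁻ z in ball y R, ENNReal.ofReal (|u z| ^ (s*p/(s-p))) ∂μ) ^ ((s-p)/(s*p)) :=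
            ENNReal.rpow_le_rpow (mul_le_mul_right hLHS _) (by positivity)
        _ ≤ _ := hS
        _ ≤ ENNReal.ofReal (C_S * R * L) * V + ENNReal.ofReal C_S * V :=
            add_le_add hterm1 hterm2
        _ = ENNReal.ofReal (C_S * R * L + C_S) * V := by
            rw [ENNReal.ofReal_add (by positivity) hC.le, add_mul]
        _ ≤ ENNReal.ofReal (A * 2^j) * V :=
            mul_le_mul_left (ENNReal.ofReal_le_ofReal hreal) _
    -- pass to real numbers
    have hBjfin : (μ (ball y R))⁻¹ * μ (ball x (ρ j)) ≠ ⊤ :=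
      ENNReal.mul_ne_top hIfin (hμ x (ρ j) (hρpos j)).2.ne
    have hrhs_fin : ENNReal.ofReal (A * 2^j) * V ≠ ⊤ :=
      ENNReal.mul_ne_top ENNReal.ofReal_ne_top
        (ENNReal.rpow_ne_top_of_nonneg (by positivity) hBjfin)
    have htR := ENNReal.toReal_mono hrhs_fin hstep1
    have eL : ((( μ (ball y R))⁻¹ * μ (ball x (ρ (j+1)))) ^ ((s-p)/(s*p))).toReal
        = a (j+1) ^ ((s-p)/(s*p)) := by
      rw [← ENNReal.toReal_rpow, haB]
    have eR : ((ENNReal.ofReal (A * 2^j)) * V).toReal = (A * 2^j) * a j ^ (1/p) := by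
      rw [ENNReal.toReal_mul, ENNReal.toReal_ofReal (by positivity), hVdef,
        ← ENNReal.toReal_rpow, haB]
    rw [eL, eR] at htR
    exact htR
  -- logarithmic iteration
  have hq0 : 0 < (s-p)/s := by positivity
  have hq1 : (s-p)/s < 1 := by rw [div_lt_one hs]; linarith
  have hrec : ∀ j : ℕ, (s-p)/s * Real.log (a (j+1)) - (p * Real.log A)
      - (p * Real.log 2) * j ≤ Real.log (a j) := by
    intro j
    have hk := hkey j
    have hlog := Real.log_le_log (Real.rpow_pos_of_pos (ha_pos (j+1)) _) hk
    rw [Real.log_rpow (ha_pos (j+1)),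
      Real.log_mul (by positivity : (A * 2^j : ℝ) ≠ 0)
        (Real.rpow_pos_of_pos (ha_pos j) _).ne',
      Real.log_mul hApos.ne' (by positivity : ((2:ℝ)^j) ≠ 0),
      Real.log_pow, Real.log_rpow (ha_pos j)] at hlog
    have hfinal : (s-p)/s * Real.log (a (j+1)) ≤
        p * Real.log A + p * Real.log 2 * j + Real.log (a j) := by
      have h := mul_le_mul_of_nonneg_left hlog hp.le
      calc (s-p)/s * Real.log (a (j+1))
          = p * ((s-p)/(s*p) * Real.log (a (j+1))) := by field_simp
        _ ≤ p * (Real.log A + ↑j * Real.log 2 + 1/p * Real.log (a j)) := h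
        _ = p * Real.log A + p * Real.log 2 * j + Real.log (a j) := by
            field_simp
    linarith
  have hm_pos : 0 < (μ (ball x (r/2))).toReal / (μ (ball y R)).toReal := by
    apply div_pos
    · exact ENNReal.toReal_pos (hμ x (r/2) (by positivity)).1.ne' (hμ x (r/2) (by positivity)).2.ne
    · exact ENNReal.toReal_pos hB0ne hB0fin.ne
  have hlb : ∀ n, Real.log ((μ (ball x (r/2))).toReal / (μ (ball y R)).toReal) ≤
      Real.log (a n) := by
    intro n
    apply Real.log_le_log hm_pos
    apply (div_le_div_iff_of_pos_right (ENNReal.toReal_pos hB0ne hB0fin.ne)).mpr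
    exact ENNReal.toReal_mono (hμ x (ρ n) (hρpos n)).2.ne
      (measure_mono (ball_subset_ball (hρhalf n)))
  have hiter := iterate_lower ((s-p)/s) (p * Real.log A) (p * Real.log 2)
    (Real.log ((μ (ball x (r/2))).toReal / (μ (ball y R)).toReal))
    (fun j => Real.log (a j)) hq0 hq1 hrec hlb
  -- evaluate the constant
  have h1q : 1 - (s-p)/s = p/s := by field_simp; ring
  have hval : (p * Real.log A) / (1 - (s-p)/s)
      + (p * Real.log 2) * ((s-p)/s) / (1 - (s-p)/s)^2
      = s * Real.log A + (s*(s-p)/p) * Real.log 2 := by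
    rw [h1q]; field_simp
  have hlog2 : (0:ℝ) ≤ Real.log 2 := Real.log_nonneg (by norm_num)
  have hbound : -(s * Real.log A + (s^2/p) * Real.log 2) ≤ Real.log (a 0) := by
    have h2 : s*(s-p)/p ≤ s^2/p := (div_le_div_iff_of_pos_right hp).mpr (by nlinarith)
    nlinarith [hiter, hval, mul_le_mul_of_nonneg_right h2 hlog2]
  -- exponentiate
  have hfinal_real : (8 * C_S) ^ (-s) * 2 ^ (-(s ^ 2) / p) * (r / R) ^ s ≤ a 0 := by
    have hexp : Real.exp (-(s * Real.log A + (s^2/p) * Real.log 2)) ≤ a 0 := by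
      rw [← Real.exp_log (ha_pos 0)]
      exact Real.exp_le_exp.mpr hbound
    refine le_trans (le_of_eq ?_) hexp
    rw [Real.rpow_def_of_pos (by positivity : (0:ℝ) < 8*C_S),
      Real.rpow_def_of_pos (by norm_num : (0:ℝ) < 2),
      Real.rpow_def_of_pos (by positivity : (0:ℝ) < r/R),
      ← Real.exp_add, ← Real.exp_add]
    congr 1
    rw [hAdef, Real.log_mul (by positivity : (8*C_S : ℝ) ≠ 0)
        (by positivity : (R/r : ℝ) ≠ 0),
      Real.log_div hR.ne' hr.ne', Real.log_div hr.ne' hR.ne']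
    ring
  -- conclude
  have hdivfin : μ (ball x r) / μ (ball y R) ≠ ⊤ :=
    (ENNReal.div_lt_top (hμ x r hr).2.ne hB0ne).ne
  have hdiv : μ (ball x r) / μ (ball y R) = ENNReal.ofReal (a 0) := by
    rw [← ENNReal.ofReal_toReal hdivfin, ENNReal.toReal_div]
    congr 1
    simp only [hadef, hρ0]
  rw [hdiv]
  exact ENNReal.ofReal_le_ofReal hfinal_real

theorem stmt11 {X : Type*} [MetricSpace X] [MeasurableSpace X] [BorelSpace X]
    (μ : Measure X)
    (hμ : ∀ (x : X) (r : ℝ), 0 < r → 0 < μ (ball x r) ∧ μ (ball x r) < ⊤)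
    {σ s p C_S : ℝ} (hσ : 1 ≤ σ) (hp : 0 < p) (hps : p < s) (hC : 0 < C_S)
    (hSob : ∀ (x₀ : X) (R₀ : ℝ), 0 < R₀ →
      ∀ u g : X → ℝ, HajlaszGrad μ (ball x₀ (σ * R₀)) u g →
        MemLpOn μ (ball x₀ (σ * R₀)) u p → MemLpOn μ (ball x₀ (σ * R₀)) g p →
        ((μ (ball x₀ R₀))⁻¹ *
            ∫⁻ z in ball x₀ R₀, ENNReal.ofReal (|u z| ^ (s * p / (s - p))) ∂μ) ^
              ((s - p) / (s * p)) ≤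
          ENNReal.ofReal C_S * ENNReal.ofReal R₀ *
              ((μ (ball x₀ (σ * R₀)))⁻¹ *
                ∫⁻ z in ball x₀ (σ * R₀), ENNReal.ofReal (g z ^ p) ∂μ) ^ (1 / p) +
            ENNReal.ofReal C_S *
              ((μ (ball x₀ (σ * R₀)))⁻¹ *
                ∫⁻ z in ball x₀ (σ * R₀), ENNReal.ofReal (|u z| ^ p) ∂μ) ^ (1 / p)) :
    (∀ (x y : X) (r R : ℝ), 0 < r → r ≤ R → ball x r ⊆ ball y R →
      ENNReal.ofReal ((8 * C_S) ^ (-s) * 2 ^ (-(s ^ 2) / p) * (r / R) ^ s) ≤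
        μ (ball x r) / μ (ball y R)) ∧
    ∃ Cd : ENNReal, Cd < ⊤ ∧ ∀ (x : X) (r : ℝ), 0 < r →
      μ (ball x (2 * r)) ≤ Cd * μ (ball x r) := by
  have hs : 0 < s := hp.trans hps
  refine ⟨fun x y r R hr hrR hsub => vol_lower μ hμ hσ hp hps hC hSob x y r R hr hrR hsub, ?_⟩
  set K : ℝ := (8 * C_S) ^ (-s) * 2 ^ (-(s ^ 2) / p) * ((1:ℝ)/2) ^ s with hKdef
  have hKpos : 0 < K := by
    have h1 : (0:ℝ) < (8 * C_S) ^ (-s) := Real.rpow_pos_of_pos (by positivity) _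
    have h2 : (0:ℝ) < (2:ℝ) ^ (-(s ^ 2) / p) := Real.rpow_pos_of_pos (by norm_num) _
    have h3 : (0:ℝ) < ((1:ℝ)/2) ^ s := Real.rpow_pos_of_pos (by norm_num) _
    positivity
  set E : ENNReal := ENNReal.ofReal K with hEdef
  have hE0 : E ≠ 0 := (ENNReal.ofReal_pos.mpr hKpos).ne'
  have hEtop : E ≠ ⊤ := ENNReal.ofReal_ne_top
  refine ⟨E⁻¹, ENNReal.inv_lt_top.mpr (ENNReal.ofReal_pos.mpr hKpos), fun x r hr => ?_⟩
  have h2r : (0:ℝ) < 2 * r := by linarith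
  obtain ⟨hb2_pos, hb2_fin⟩ := hμ x (2*r) h2r
  have hv := vol_lower μ hμ hσ hp hps hC hSob x x r (2*r) hr (by linarith)
    (ball_subset_ball (by linarith))
  have hrr : r / (2*r) = (1:ℝ)/2 := by
    field_simp
  rw [hrr] at hv
  rw [← hKdef, ← hEdef] at hv
  have hmul : E * μ (ball x (2*r)) ≤ μ (ball x r) :=
    (ENNReal.le_div_iff_mul_le (Or.inl hb2_pos.ne') (Or.inl hb2_fin.ne)).mp hv
  calc μ (ball x (2*r)) = E⁻¹ * (E * μ (ball x (2*r))) := by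
        rw [← mul_assoc, ENNReal.inv_mul_cancel hE0 hEtop, one_mul]
    _ ≤ E⁻¹ * μ (ball x r) := mul_le_mul_right hmul _
end

section
/- (Global Hölder estimate implies lower mass bound, case p > s.) Let (X,d,μ) be a uniformly perfect metric-measure space with constant λ ∈ (0,1), and fix 0 < s < p < ∞. Suppose there is C_H > 0 such that |u(x)−u(y)| ≤ C_H d(x,y)^{1−s/p} ‖g‖_{L^p(X,μ)} for all x,y ∈ X, all u ∈ M^{1,p}(X,d,μ) and g ∈ D(u). Then μ(B(x,r)) ≥ κ r^s for all x ∈ X and all finite r ∈ (0, diam(X)], where one may take κ = min( (λ/C_H)^p, μ(X)·diam(X)^{−s} when X is bounded ). -/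
open Metric MeasureTheory Set

/-- The `L^p(Ω,μ)` norm of `g`, as a real number. -/
noncomputable def LpNorm {X : Type*} [MetricSpace X] [MeasurableSpace X]
    (μ : Measure X) (Ω : Set X) (g : X → ℝ) (p : ℝ) : ℝ :=
  ((∫⁻ z in Ω, ENNReal.ofReal (|g z| ^ p) ∂μ) ^ (1 / p)).toReal

/-- Main estimate in the case `ball x r ≠ univ`. -/
lemma stmt13_aux {X : Type*} [MetricSpace X] [MeasurableSpace X] [BorelSpace X]
    (μ : Measure X)
    (hμ : ∀ (x : X) (r : ℝ), 0 < r → 0 < μ (ball x r) ∧ μ (ball x r) < ⊤)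
    {lam : ℝ} (hlam0 : 0 < lam) (hlam : lam < 1)
    (hup : ∀ (x : X) (r : ℝ), 0 < r → ball x r ≠ univ →
      (ball x r \ ball x (lam * r)).Nonempty)
    {s p C_H : ℝ} (hs : 0 < s) (hsp : s < p) (hC : 0 < C_H)
    (hHold : ∀ u g : X → ℝ, HajlaszGrad μ univ u g →
      MemLpOn μ univ u p → MemLpOn μ univ g p →
      ∀ x y : X, |u x - u y| ≤ C_H * dist x y ^ (1 - s / p) * LpNorm μ univ g p)
    (x : X) (r : ℝ) (hr : 0 < r) (hne : ball x r ≠ univ) :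
    ENNReal.ofReal ((lam / C_H) ^ p * r ^ s) ≤ μ (ball x r) := by
  have hp0 : 0 < p := hs.trans hsp
  have hp0' : p ≠ 0 := ne_of_gt hp0
  obtain ⟨y, hy⟩ := hup x r hr hne
  have hy_in : dist x y < r := by
    have := hy.1; rwa [mem_ball, dist_comm] at this
  have hy_out : lam * r ≤ dist x y := by
    have := hy.2; rw [mem_ball, dist_comm, not_lt] at this; exact this
  set R := lam * r with hRdef
  have hR0 : 0 < R := mul_pos hlam0 hr
  have hRr : R < r := by nlinarith
  set u : X → ℝ := fun z => max (1 - dist x z / R) 0 with hu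
  set g : X → ℝ := fun z => (ball x R).indicator (fun _ => R⁻¹) z with hg
  have hgR : ∀ z, z ∈ ball x R → g z = R⁻¹ := fun z hz => indicator_of_mem hz _
  have hg0 : ∀ z, z ∉ ball x R → g z = 0 := fun z hz => indicator_of_notMem hz _
  -- pointwise facts
  have hg_nonneg : ∀ z, 0 ≤ g z := fun z =>
    indicator_nonneg (fun _ _ => inv_nonneg.mpr hR0.le) z
  have hu_zero : ∀ z, z ∉ ball x R → u z = 0 := by
    intro z hz
    rw [mem_ball, dist_comm, not_lt] at hz
    have : 1 - dist x z / R ≤ 0 := by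
      rw [sub_nonpos, le_div_iff₀ hR0, one_mul]; exact hz
    simp only [hu]; exact max_eq_right this
  have hu_le : ∀ z, u z ≤ 1 := by
    intro z
    have : 0 ≤ dist x z / R := div_nonneg dist_nonneg hR0.le
    exact max_le (by linarith) zero_le_one
  have hu_nonneg : ∀ z, 0 ≤ u z := fun z => le_max_right _ _
  have hlip : ∀ z w, |u z - u w| ≤ dist z w / R := by
    intro z w
    have h1 : |u z - u w| ≤ |(1 - dist x z / R) - (1 - dist x w / R)| :=
      abs_max_sub_max_le_abs _ _ _
    have h2 : |(1 - dist x z / R) - (1 - dist x w / R)|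
        = |dist x w - dist x z| / R := by
      have heq : (1 - dist x z / R) - (1 - dist x w / R)
          = (dist x w - dist x z) / R := by ring
      rw [heq, abs_div, abs_of_pos hR0]
    have h3 : |dist x w - dist x z| ≤ dist z w := by
      rw [abs_sub_comm, dist_comm x z, dist_comm x w]
      exact abs_dist_sub_le z w x
    calc |u z - u w| ≤ |dist x w - dist x z| / R := h2 ▸ h1
      _ ≤ dist z w / R := by gcongr
  -- Hajłasz gradient
  have hHaj : HajlaszGrad μ univ u g := by
    refine ⟨hg_nonneg, ∅, measure_empty, ?_⟩
    intro z _ w _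
    by_cases hzw : z ∈ ball x R ∨ w ∈ ball x R
    · have hginv : R⁻¹ ≤ g z + g w := by
        rcases hzw with h | h
        · have := hgR z h
          nlinarith [hg_nonneg w]
        · have := hgR w h
          nlinarith [hg_nonneg z]
      calc |u z - u w| ≤ dist z w / R := hlip z w
        _ = dist z w * R⁻¹ := div_eq_mul_inv _ _
        _ ≤ dist z w * (g z + g w) :=
          mul_le_mul_of_nonneg_left hginv dist_nonneg
    · push_neg at hzw
      rw [hu_zero z hzw.1, hu_zero w hzw.2, sub_zero, abs_zero]
      exact mul_nonneg dist_nonneg (add_nonneg (hg_nonneg z) (hg_nonneg w))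
  -- u ∈ L^p
  have hμR := hμ x R hR0
  have hu_Lp : MemLpOn μ univ u p := by
    unfold MemLpOn
    rw [setLIntegral_univ]
    calc ∫⁻ z, ENNReal.ofReal (|u z| ^ p) ∂μ
        ≤ ∫⁻ z, (ball x R).indicator (fun _ => (1 : ENNReal)) z ∂μ := by
          apply lintegral_mono
          intro z
          by_cases hz : z ∈ ball x R
          · rw [indicator_of_mem hz]
            refine ENNReal.ofReal_le_one.mpr ?_
            exact Real.rpow_le_one (abs_nonneg _)
              (by rw [abs_of_nonneg (hu_nonneg z)]; exact hu_le z) hp0.le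
          · rw [indicator_of_notMem hz]
            simp only [hu_zero z hz, abs_zero, Real.zero_rpow hp0',
              ENNReal.ofReal_zero, le_refl]
      _ = μ (ball x R) := by
          rw [lintegral_indicator_const measurableSet_ball, one_mul]
      _ < ⊤ := hμR.2
  -- g integral
  have hg_int : ∫⁻ z in univ, ENNReal.ofReal (|g z| ^ p) ∂μ
      = ENNReal.ofReal (R⁻¹ ^ p) * μ (ball x R) := by
    rw [setLIntegral_univ]
    rw [← lintegral_indicator_const measurableSet_ball (ENNReal.ofReal (R⁻¹ ^ p))]
    congr 1; funext z
    by_cases hz : z ∈ ball x R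
    · rw [indicator_of_mem hz, hgR z hz, abs_of_nonneg (inv_nonneg.mpr hR0.le)]
    · rw [indicator_of_notMem hz, hg0 z hz]
      simp [Real.zero_rpow hp0']
  have hg_Lp : MemLpOn μ univ g p := by
    unfold MemLpOn
    rw [hg_int]
    exact ENNReal.mul_lt_top ENNReal.ofReal_lt_top hμR.2
  -- norm bound
  have hμr := hμ x r hr
  set M : ℝ := (μ (ball x r)).toReal with hM
  have hM0 : 0 < M := ENNReal.toReal_pos (ne_of_gt hμr.1) (ne_of_lt hμr.2)
  have hnorm : LpNorm μ univ g p ≤ R⁻¹ * M ^ (1 / p) := by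
    unfold LpNorm
    rw [hg_int]
    have hmono : ENNReal.ofReal (R⁻¹ ^ p) * μ (ball x R)
        ≤ ENNReal.ofReal (R⁻¹ ^ p) * μ (ball x r) :=
      mul_le_mul_right (measure_mono (ball_subset_ball hRr.le)) _
    have hfin : (ENNReal.ofReal (R⁻¹ ^ p) * μ (ball x r)) ^ (1 / p) ≠ ⊤ := by
      apply ne_of_lt
      apply ENNReal.rpow_lt_top_of_nonneg (by positivity)
      exact ENNReal.mul_ne_top ENNReal.ofReal_ne_top (ne_of_lt hμr.2)
    calc ((ENNReal.ofReal (R⁻¹ ^ p) * μ (ball x R)) ^ (1 / p)).toReal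
        ≤ ((ENNReal.ofReal (R⁻¹ ^ p) * μ (ball x r)) ^ (1 / p)).toReal := by
          apply ENNReal.toReal_mono hfin
          exact ENNReal.rpow_le_rpow hmono (by positivity)
      _ = R⁻¹ * M ^ (1 / p) := by
          rw [ENNReal.mul_rpow_of_nonneg _ _ (by positivity : (0:ℝ) ≤ 1 / p),
            ENNReal.toReal_mul]
          congr 1
          · rw [ENNReal.ofReal_rpow_of_nonneg (by positivity) (by positivity),
              ← Real.rpow_mul (by positivity : (0:ℝ) ≤ R⁻¹),
              mul_one_div, div_self hp0', Real.rpow_one,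
              ENNReal.toReal_ofReal (by positivity)]
          · exact (ENNReal.toReal_rpow _ _).symm
  -- apply the Hölder hypothesis at x and y
  have hux : u x = 1 := by simp [hu]
  have huy : u y = 0 := by
    apply hu_zero
    rw [mem_ball, dist_comm, not_lt]; exact hy_out
  have hstart : (1 : ℝ) ≤ C_H * dist x y ^ (1 - s / p) * LpNorm μ univ g p := by
    have := hHold u g hHaj hu_Lp hg_Lp x y
    rwa [hux, huy, sub_zero, abs_one] at this
  have hexp0 : 0 ≤ 1 - s / p := by
    rw [sub_nonneg, div_le_one hp0]; exact hsp.le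
  have hdist : dist x y ^ (1 - s / p) ≤ r ^ (1 - s / p) :=
    Real.rpow_le_rpow dist_nonneg hy_in.le hexp0
  have hnorm0 : 0 ≤ LpNorm μ univ g p := ENNReal.toReal_nonneg
  have hkey : (1 : ℝ) ≤ C_H * r ^ (1 - s / p) * (R⁻¹ * M ^ (1 / p)) := by
    calc (1:ℝ) ≤ C_H * dist x y ^ (1 - s / p) * LpNorm μ univ g p := hstart
      _ ≤ C_H * r ^ (1 - s / p) * (R⁻¹ * M ^ (1 / p)) := by
        apply mul_le_mul (by gcongr) hnorm hnorm0 (by positivity)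
  -- rearrange
  have hA : (C_H * r ^ (1 - s / p) * R⁻¹) * ((lam / C_H) * r ^ (s / p)) = 1 := by
    have hrw : r ^ (1 - s / p) * r ^ (s / p) = r := by
      rw [← Real.rpow_add hr, sub_add_cancel, Real.rpow_one]
    calc (C_H * r ^ (1 - s / p) * R⁻¹) * ((lam / C_H) * r ^ (s / p))
        = (r ^ (1 - s / p) * r ^ (s / p)) * (C_H * (lam / C_H) * R⁻¹) := by ring
      _ = r * (C_H * (lam / C_H) * (lam * r)⁻¹) := by rw [hrw, hRdef]
      _ = 1 := by field_simp
  have hMc : (lam / C_H) * r ^ (s / p) ≤ M ^ (1 / p) := by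
    have hc0 : 0 ≤ (lam / C_H) * r ^ (s / p) := by positivity
    calc (lam / C_H) * r ^ (s / p)
        = 1 * ((lam / C_H) * r ^ (s / p)) := (one_mul _).symm
      _ ≤ (C_H * r ^ (1 - s / p) * (R⁻¹ * M ^ (1 / p))) * ((lam / C_H) * r ^ (s / p)) := by
          apply mul_le_mul_of_nonneg_right hkey hc0
      _ = ((C_H * r ^ (1 - s / p) * R⁻¹) * ((lam / C_H) * r ^ (s / p))) * M ^ (1 / p) := by
          ring
      _ = M ^ (1 / p) := by rw [hA, one_mul]
  -- raise to the power p
  have hfinal : (lam / C_H) ^ p * r ^ s ≤ M := by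
    have h1 : ((lam / C_H) * r ^ (s / p)) ^ p ≤ (M ^ (1 / p)) ^ p :=
      Real.rpow_le_rpow (by positivity) hMc hp0.le
    have h2 : (M ^ (1 / p)) ^ p = M := by
      rw [← Real.rpow_mul hM0.le, one_div_mul_cancel hp0', Real.rpow_one]
    have h3 : ((lam / C_H) * r ^ (s / p)) ^ p = (lam / C_H) ^ p * r ^ s := by
      rw [Real.mul_rpow (by positivity) (by positivity),
        ← Real.rpow_mul hr.le, div_mul_cancel₀ _ hp0']
    rw [h2, h3] at h1; exact h1
  exact ENNReal.ofReal_le_of_le_toReal hfinal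

theorem stmt13 {X : Type*} [MetricSpace X] [MeasurableSpace X] [BorelSpace X]
    (μ : Measure X)
    (hμ : ∀ (x : X) (r : ℝ), 0 < r → 0 < μ (ball x r) ∧ μ (ball x r) < ⊤)
    {lam : ℝ} (hlam0 : 0 < lam) (hlam : lam < 1)
    (hup : ∀ (x : X) (r : ℝ), 0 < r → ball x r ≠ univ →
      (ball x r \ ball x (lam * r)).Nonempty)
    {s p C_H : ℝ} (hs : 0 < s) (hsp : s < p) (hC : 0 < C_H)
    (hHold : ∀ u g : X → ℝ, HajlaszGrad μ univ u g →
      MemLpOn μ univ u p → MemLpOn μ univ g p →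
      ∀ x y : X, |u x - u y| ≤ C_H * dist x y ^ (1 - s / p) * LpNorm μ univ g p) :
    ∃ κ : ℝ, 0 < κ ∧ ∀ (x : X) (r : ℝ), 0 < r →
      ENNReal.ofReal r ≤ EMetric.diam (univ : Set X) →
      ENNReal.ofReal (κ * r ^ s) ≤ μ (ball x r) := by
  have hκ0 : (0:ℝ) < (lam / C_H) ^ p := Real.rpow_pos_of_pos (by positivity) _
  by_cases hbd : ∃ (x0 : X) (r0 : ℝ), 0 < r0 ∧ ball x0 r0 = univ
  · obtain ⟨x0, r0, hr0, hball⟩ := hbd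
    have hμX0 : 0 < μ univ := hball ▸ (hμ x0 r0 hr0).1
    have hμXfin : μ univ < ⊤ := hball ▸ (hμ x0 r0 hr0).2
    have hdiamfin : EMetric.diam (univ : Set X) ≠ ⊤ := by
      have : Bornology.IsBounded (univ : Set X) := hball ▸ isBounded_ball
      exact this.ediam_ne_top
    set D : ℝ := max (EMetric.diam (univ : Set X)).toReal 1 with hD
    have hD0 : 0 < D := lt_of_lt_of_le one_pos (le_max_right _ _)
    set μX : ℝ := (μ univ).toReal with hμXr
    have hμX0' : 0 < μX := ENNReal.toReal_pos (ne_of_gt hμX0) (ne_of_lt hμXfin)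
    refine ⟨min ((lam / C_H) ^ p) (μX / D ^ s), lt_min hκ0 (by positivity), ?_⟩
    intro x r hr hrdiam
    by_cases hne : ball x r = univ
    · have hrD : r ≤ D := by
        exact ((ENNReal.ofReal_le_iff_le_toReal hdiamfin).mp hrdiam).trans
          (le_max_left _ _)
      have hrs : r ^ s ≤ D ^ s := Real.rpow_le_rpow hr.le hrD hs.le
      have : min ((lam / C_H) ^ p) (μX / D ^ s) * r ^ s ≤ μX := by
        calc min ((lam / C_H) ^ p) (μX / D ^ s) * r ^ s
            ≤ (μX / D ^ s) * D ^ s := by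
              apply mul_le_mul (min_le_right _ _) hrs (by positivity) (by positivity)
          _ = μX := by field_simp
      rw [hne]
      exact ENNReal.ofReal_le_of_le_toReal this
    · calc ENNReal.ofReal (min ((lam / C_H) ^ p) (μX / D ^ s) * r ^ s)
          ≤ ENNReal.ofReal ((lam / C_H) ^ p * r ^ s) := by
            apply ENNReal.ofReal_le_ofReal
            apply mul_le_mul_of_nonneg_right (min_le_left _ _)
              (Real.rpow_nonneg hr.le _)
        _ ≤ μ (ball x r) :=
            stmt13_aux μ hμ hlam0 hlam hup hs hsp hC hHold x r hr hne
  · push_neg at hbd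
    refine ⟨(lam / C_H) ^ p, hκ0, ?_⟩
    intro x r hr _
    exact stmt13_aux μ hμ hlam0 hlam hup hs hsp hC hHold x r hr (hbd x r hr)
end
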